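/- arXiv:dg-ga/9612018 — 8 statements merged into one kernel-verified Lean document; each statement's English description precedes it below -/
import Mathlib

section
/- Let n ≥ 1 and λ ∈ ℝ with λ ≠ 0. Let ξ : ℝ → Mₙ(ℝ) be continuous and 2π-periodic, let g : ℝ → GLₙ(ℝ) be C¹ and 2π-periodic, and let u : ℝ → Mₙ(ℝ) be differentiable with u(0) = 1 and λ·u′(t) = u(t)·ξ(t). Then the map w(t) := g(0)·u(t)·g(t)⁻¹ satisfies w(0) = 1 and λ·w′(t) = w(t)·(g·ξ)(t) for all t, and consequently Hol_λ(g·ξ) = g(0)·Hol_λ(ξ)·g(0)⁻¹. (Equivariance of the holonomy map: Hol(g·ξ) = Ad_{g(0)} Hol(ξ).) -/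
open Real

noncomputable section

attribute [local instance] Matrix.linftyOpNormedRing Matrix.linftyOpNormedAlgebra

/-- `Mat n` is the space of real `n × n` matrices. -/
abbrev Mat (n : ℕ) := Matrix (Fin n) (Fin n) ℝ

/-- The level-`λ` gauge action of a (C¹) map `g : ℝ → GLₙ(ℝ)` on a map `ξ : ℝ → Mₙ(ℝ)`:
`(g · ξ)(t) = g t * ξ t * (g t)⁻¹ − λ • (g' t * (g t)⁻¹)`. -/
def gaugeAct {n : ℕ} (lam : ℝ) (g ξ : ℝ → Mat n) : ℝ → Mat n :=
  fun t => g t * ξ t * (g t)⁻¹ - lam • (deriv g t * (g t)⁻¹)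

/-- equivariance of the holonomy map.  If `u` is the fundamental solution for the
loop `ξ` at level `λ` and `g` is a `2π`-periodic C¹ gauge transformation, then
`w t := g 0 * u t * (g t)⁻¹` is differentiable, satisfies `w 0 = 1` and
`λ • w' t = w t * (g·ξ) t`, and consequently `Hol_λ(g·ξ) = w (2π) = g 0 * Hol_λ(ξ) * (g 0)⁻¹`. -/
theorem holonomy_equivariant (n : ℕ) (hn : 1 ≤ n) (lam : ℝ) (hlam : lam ≠ 0)
    (ξ : ℝ → Mat n) (hξ : Continuous ξ) (hξper : Function.Periodic ξ (2 * π))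
    (g : ℝ → Mat n) (hg : ContDiff ℝ 1 g) (hgper : Function.Periodic g (2 * π))
    (hgu : ∀ t : ℝ, IsUnit (g t))
    (u : ℝ → Mat n) (hdiff : Differentiable ℝ u) (hu0 : u 0 = 1)
    (hode : ∀ t : ℝ, lam • deriv u t = u t * ξ t) :
    (fun t => g 0 * u t * (g t)⁻¹) 0 = 1 ∧
    Differentiable ℝ (fun t => g 0 * u t * (g t)⁻¹) ∧
    (∀ t : ℝ, lam • deriv (fun s => g 0 * u s * (g s)⁻¹) t
        = (g 0 * u t * (g t)⁻¹) * gaugeAct lam g ξ t) ∧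
    (fun t => g 0 * u t * (g t)⁻¹) (2 * π) = g 0 * u (2 * π) * (g 0)⁻¹ := by
  have hginv : ∀ t : ℝ, (g t)⁻¹ = Ring.inverse (g t) := fun t =>
    Matrix.nonsing_inv_eq_ringInverse (g t)
  have hgd : Differentiable ℝ g := hg.differentiable one_ne_zero
  -- derivative of the inverse of g
  have hinv : ∀ t : ℝ, HasDerivAt (fun s => (g s)⁻¹)
      (-((g t)⁻¹ * deriv g t * (g t)⁻¹)) t := by
    intro t
    have hcoe : (((hgu t).unit⁻¹ : (Mat n)ˣ) : Mat n) = (g t)⁻¹ := by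
      rw [hginv]
      conv_rhs => rw [← (hgu t).unit_spec]
      exact (Ring.inverse_unit (hgu t).unit).symm
    have hU : HasFDerivAt Ring.inverse
        (-ContinuousLinearMap.mulLeftRight ℝ (Mat n) ((g t)⁻¹) ((g t)⁻¹)) (g t) := by
      have h := hasFDerivAt_ringInverse (𝕜 := ℝ) (hgu t).unit
      rw [hcoe] at h
      rwa [show ((hgu t).unit : Mat n) = g t from (hgu t).unit_spec] at h
    have hgt : HasDerivAt g (deriv g t) t := (hgd t).hasDerivAt
    have hcomp := hU.comp_hasDerivAt t hgt
    have heq : (Ring.inverse ∘ g) = fun s => (g s)⁻¹ := by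
      funext s; rw [hginv]; rfl
    rw [heq] at hcomp
    simp at hcomp
    exact hcomp
  -- derivative of w
  have hw : ∀ t : ℝ, HasDerivAt (fun s => g 0 * u s * (g s)⁻¹)
      ((g 0 * deriv u t) * (g t)⁻¹ + (g 0 * u t) * (-((g t)⁻¹ * deriv g t * (g t)⁻¹))) t := by
    intro t
    have h1 : HasDerivAt (fun s => g 0 * u s) (g 0 * deriv u t) t :=
      ((hdiff t).hasDerivAt).const_mul (g 0)
    exact h1.mul (hinv t)
  refine ⟨?_, fun t => (hw t).differentiableAt, ?_, ?_⟩
  · simp only [hu0, mul_one]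
    exact Matrix.mul_nonsing_inv (g 0) ((Matrix.isUnit_iff_isUnit_det _).mp (hgu 0))
  · intro t
    rw [show deriv (fun s => g 0 * u s * (g s)⁻¹) t = _ from (hw t).deriv]
    have hinvmul : (g t)⁻¹ * g t = 1 := by
      rw [hginv]; exact Ring.inverse_mul_cancel _ (hgu t)
    have h2 : lam • ((g 0 * deriv u t) * (g t)⁻¹ + (g 0 * u t) *
        (-((g t)⁻¹ * deriv g t * (g t)⁻¹)))
        = g 0 * (lam • deriv u t) * (g t)⁻¹
          - lam • (g 0 * u t * ((g t)⁻¹ * deriv g t * (g t)⁻¹)) := by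
      rw [smul_add, mul_neg, smul_neg, sub_eq_add_neg]
      congr 1
      simp [mul_smul_comm, smul_mul_assoc]
    rw [h2, hode t, gaugeAct]
    rw [mul_sub, mul_smul_comm]
    congr 1
    · calc g 0 * (u t * ξ t) * (g t)⁻¹
          = g 0 * u t * (((g t)⁻¹ * g t) * (ξ t * (g t)⁻¹)) := by
            rw [hinvmul, one_mul]; noncomm_ring
        _ = g 0 * u t * (g t)⁻¹ * (g t * ξ t * (g t)⁻¹) := by noncomm_ring
    · congr 1
      noncomm_ring
  · show g 0 * u (2 * π) * (g (2 * π))⁻¹ = g 0 * u (2 * π) * (g 0)⁻¹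
    rw [show g (2 * π) = g 0 from by simpa using hgper 0]
end
end

section
/- Let n ≥ 1 and λ ∈ ℝ with λ ≠ 0. Let ξ : ℝ → Mₙ(ℝ) be continuous, let u : ℝ → Mₙ(ℝ) be differentiable with u(0) = 1 and λ·u′(t) = u(t)·ξ(t), and let g : ℝ → GLₙ(ℝ) be a C¹ map fixed by the level-λ gauge action, i.e. g(t)·ξ(t)·g(t)⁻¹ − λ·g′(t)·g(t)⁻¹ = ξ(t) for all t. Then g(t) = u(t)⁻¹·g(0)·u(t) for all t ∈ ℝ. If moreover ξ and g are 2π-periodic, then g(0) commutes with the holonomy u(2π). (A gauge transformation stabilizing ξ is determined by its value at 0, which centralizes Hol_λ(ξ); in particular evaluation at 0 is injective on the stabilizer (LG)_ξ.) -/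
open Real

noncomputable section

attribute [local instance] Matrix.linftyOpNormedRing Matrix.linftyOpNormedAlgebra

/-- Uniqueness for the linear ODE `lam • y' = y * ξ`. -/
theorem ode_uniq_aux {n : ℕ} {lam : ℝ} (hlam : lam ≠ 0) {ξ : ℝ → Mat n} (hξ : Continuous ξ)
    {y z : ℝ → Mat n} (hy : Differentiable ℝ y) (hz : Differentiable ℝ z)
    (hyode : ∀ t, lam • deriv y t = y t * ξ t) (hzode : ∀ t, lam • deriv z t = z t * ξ t)
    {t₀ : ℝ} (h0 : y t₀ = z t₀) (t : ℝ) : y t = z t := by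
  have h1 := min_le_left t₀ t
  have h2 := min_le_right t₀ t
  have h3 := le_max_left t₀ t
  have h4 := le_max_right t₀ t
  set a : ℝ := min t₀ t - 1 with ha
  set b : ℝ := max t₀ t + 1 with hb
  have hab : a ≤ b := by simp only [ha, hb]; linarith
  have ht₀ : t₀ ∈ Set.Ioo a b := ⟨by linarith, by linarith⟩
  have htm : t ∈ Set.Icc a b := ⟨by linarith, by linarith⟩
  set c : ℝ → ℝ := fun s => max a (min s b) with hc
  have hcmem : ∀ s, c s ∈ Set.Icc a b :=
    fun s => ⟨le_max_left _ _, max_le hab (min_le_right _ _)⟩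
  have hceq : ∀ s ∈ Set.Icc a b, c s = s := by
    intro s hs
    simp only [hc, min_eq_left hs.2, max_eq_right hs.1]
  obtain ⟨C, hC⟩ :=
    (isCompact_Icc (a := a) (b := b)).exists_bound_of_continuousOn hξ.continuousOn
  have hC0 : 0 ≤ C := le_trans (norm_nonneg _) (hC a ⟨le_refl a, hab⟩)
  set K : NNReal := ⟨|lam⁻¹| * C, by positivity⟩ with hK
  set v : ℝ → Mat n → Mat n := fun s M => lam⁻¹ • (M * ξ (c s)) with hv
  have hlip : ∀ s : ℝ, LipschitzOnWith K (v s) Set.univ := by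
    intro s
    apply LipschitzWith.lipschitzOnWith
    apply LipschitzWith.of_dist_le_mul
    intro X Y
    have hsub : v s X - v s Y = lam⁻¹ • ((X - Y) * ξ (c s)) := by
      simp only [hv, sub_mul, smul_sub]
    rw [dist_eq_norm, dist_eq_norm, hsub, norm_smul]
    have hb1 : ‖(X - Y) * ξ (c s)‖ ≤ ‖X - Y‖ * C :=
      le_trans (norm_mul_le _ _) (by gcongr; exact hC _ (hcmem s))
    have hKc : (K : ℝ) = |lam⁻¹| * C := rfl
    rw [hKc, Real.norm_eq_abs]
    nlinarith [abs_nonneg lam⁻¹, norm_nonneg (X - Y)]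
  have hderiv_eq : ∀ (w : ℝ → Mat n), Differentiable ℝ w →
      (∀ s, lam • deriv w s = w s * ξ s) →
      ∀ s ∈ Set.Icc a b, HasDerivAt w (v s (w s)) s := by
    intro w hw hwode s hs
    have hvv : v s (w s) = deriv w s := by
      simp only [hv, hceq s hs, ← hwode s, smul_smul, inv_mul_cancel₀ hlam, one_smul]
    rw [hvv]
    exact (hw s).hasDerivAt
  have key := ODE_solution_unique_of_mem_Icc (v := v) (s := fun _ => Set.univ) (fun s _ => hlip s) ht₀
    hy.continuous.continuousOn
    (fun s hs => hderiv_eq y hy hyode s (Set.Ioo_subset_Icc_self hs))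
    (fun _ _ => trivial)
    hz.continuous.continuousOn
    (fun s hs => hderiv_eq z hz hzode s (Set.Ioo_subset_Icc_self hs))
    (fun _ _ => trivial) h0
  exact key htm

/-- if a C¹ gauge transformation `g` fixes `ξ` under the level-`λ` gauge action,
then `g t = (u t)⁻¹ * g 0 * u t` where `u` is the fundamental solution; and if moreover `ξ` and
`g` are `2π`-periodic then `g 0` commutes with the holonomy `u (2π)`. -/
theorem gauge_stabilizer_determined_by_value_at_zero (n : ℕ) (hn : 1 ≤ n)
    (lam : ℝ) (hlam : lam ≠ 0)
    (ξ : ℝ → Mat n) (hξ : Continuous ξ)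
    (u : ℝ → Mat n) (hdiff : Differentiable ℝ u) (hu0 : u 0 = 1)
    (hode : ∀ t : ℝ, lam • deriv u t = u t * ξ t)
    (g : ℝ → Mat n) (hg : ContDiff ℝ 1 g) (hgu : ∀ t : ℝ, IsUnit (g t))
    (hfix : ∀ t : ℝ, g t * ξ t * (g t)⁻¹ - lam • (deriv g t * (g t)⁻¹) = ξ t) :
    (∀ t : ℝ, g t = (u t)⁻¹ * g 0 * u t) ∧
    (Function.Periodic ξ (2 * π) → Function.Periodic g (2 * π) →
      g 0 * u (2 * π) = u (2 * π) * g 0) := by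
  have hgd : Differentiable ℝ g := hg.differentiable one_ne_zero
  have hinv : ∀ t, (g t)⁻¹ * g t = 1 :=
    fun t => Matrix.nonsing_inv_mul _ ((Matrix.isUnit_iff_isUnit_det _).mp (hgu t))
  -- the ODE satisfied by g
  have hgode : ∀ t, lam • deriv g t = g t * ξ t - ξ t * g t := by
    intro t
    have h := congrArg (fun M => M * g t) (hfix t)
    simp only [sub_mul, smul_mul_assoc, mul_assoc] at h
    rw [hinv t, mul_one, mul_one] at h
    have h2 := sub_sub_cancel (g t * ξ t) (lam • deriv g t)
    rw [h] at h2
    rw [← h2]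
  -- u t * g t = g 0 * u t
  have hw : ∀ t, u t * g t = g 0 * u t := by
    have hy : Differentiable ℝ (fun t => u t * g t) := hdiff.mul hgd
    have hz : Differentiable ℝ (fun t => g 0 * u t) := hdiff.const_mul _
    have hyode : ∀ t, lam • deriv (fun t => u t * g t) t = (u t * g t) * ξ t := by
      intro t
      rw [show deriv (fun t => u t * g t) t = _ from ((hdiff t).hasDerivAt.mul (hgd t).hasDerivAt).deriv, smul_add, ← smul_mul_assoc]
      erw [hode t]
      rw [← mul_smul_comm]
      erw [hgode t]
      rw [mul_sub]
      noncomm_ring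
    have hzode : ∀ t, lam • deriv (fun t => g 0 * u t) t = (g 0 * u t) * ξ t := by
      intro t
      rw [show deriv (fun t => g 0 * u t) t = _ from ((hdiff t).hasDerivAt.const_mul (g 0)).deriv, ← mul_smul_comm]
      erw [hode t]
      rw [mul_assoc]
    exact ode_uniq_aux hlam hξ hy hz hyode hzode (t₀ := 0) (by simp [hu0]) 
  -- u t is invertible for all t
  have huu : ∀ t, IsUnit (u t) := by
    intro t₁
    by_contra hne
    have hdet : (u t₁).det = 0 := by
      rw [Matrix.isUnit_iff_isUnit_det, isUnit_iff_ne_zero, not_not] at hne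
      exact hne
    obtain ⟨cvec, hc0, hcv⟩ := Matrix.exists_vecMul_eq_zero_iff.mpr hdet
    set Cm : Mat n := Matrix.of (fun _ j => cvec j) with hCm
    have hy : Differentiable ℝ (fun t => Cm * u t) := hdiff.const_mul _
    have hyode : ∀ t, lam • deriv (fun t => Cm * u t) t = (Cm * u t) * ξ t := by
      intro t
      rw [show deriv (fun t => Cm * u t) t = _ from ((hdiff t).hasDerivAt.const_mul Cm).deriv, ← mul_smul_comm]
      erw [hode t]
      rw [mul_assoc]
    have hzode : ∀ t, lam • deriv (fun _ : ℝ => (0 : Mat n)) t = (0 : Mat n) * ξ t := by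
      intro t
      rw [show deriv (fun _ : ℝ => (0 : Mat n)) t = 0 from deriv_const t 0]
      simp
    have hCu : Cm * u t₁ = 0 := by
      ext i j
      have h := congrFun hcv j
      simp only [Matrix.vecMul, dotProduct, Pi.zero_apply] at h
      simp only [Matrix.mul_apply, hCm, Matrix.of_apply, Matrix.zero_apply]
      exact h
    have hfin := ode_uniq_aux hlam hξ hy (differentiable_const _) hyode hzode
      (t₀ := t₁) hCu 0
    rw [hu0, mul_one] at hfin
    apply hc0
    funext j
    have := congrFun (congrFun hfin ⟨0, hn⟩) j
    simpa [hCm] using this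
  have hmain : ∀ t, g t = (u t)⁻¹ * g 0 * u t := by
    intro t
    have h1 : (u t)⁻¹ * u t = 1 :=
      Matrix.nonsing_inv_mul _ ((Matrix.isUnit_iff_isUnit_det _).mp (huu t))
    calc g t = ((u t)⁻¹ * u t) * g t := by rw [h1, one_mul]
      _ = (u t)⁻¹ * (g 0 * u t) := by rw [mul_assoc, hw t]
      _ = (u t)⁻¹ * g 0 * u t := by rw [mul_assoc]
  refine ⟨hmain, fun _ hgp => ?_⟩
  have h2 : g (2 * π) = g 0 := by simpa using hgp 0
  have h3 := hw (2 * π)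
  rw [h2] at h3
  exact h3.symm
end
end

section
/- Let n ≥ 1 and λ ∈ ℝ with λ ≠ 0. Let ξ : ℝ → Mₙ(ℝ) be continuous and 2π-periodic, let u : ℝ → Mₙ(ℝ) be differentiable with u(0) = 1 and λ·u′(t) = u(t)·ξ(t), and let k ∈ GLₙ(ℝ) commute with u(2π). Then the map g(t) := u(t)⁻¹·k·u(t) is C¹, 2π-periodic, takes values in GLₙ(ℝ), satisfies g(0) = k, and is fixed by the level-λ gauge action: g(t)·ξ(t)·g(t)⁻¹ − λ·g′(t)·g(t)⁻¹ = ξ(t) for all t. (Hence evaluation at 0 maps the stabilizer (LG)_ξ of ξ onto the centralizer of the holonomy Hol_λ(ξ), as claimed in the paper's description of isotropy groups of the affine coadjoint action.) -/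
open Real

noncomputable section

attribute [local instance] Matrix.linftyOpNormedRing Matrix.linftyOpNormedAlgebra

/-- Uniqueness for the linear ODE `f' = f * A`. -/
lemma lin_ode_unique {n : ℕ} (A : ℝ → Mat n) (hA : Continuous A)
    (f g : ℝ → Mat n)
    (hf : ∀ t, HasDerivAt f (f t * A t) t) (hg : ∀ t, HasDerivAt g (g t * A t) t)
    {t₀ : ℝ} (h : f t₀ = g t₀) (t₁ : ℝ) : f t₁ = g t₁ := by
  set a : ℝ := min t₀ t₁ - 1 with ha
  set b : ℝ := max t₀ t₁ + 1 with hb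
  have hab : a ≤ b := by
    have := min_le_max (a := t₀) (b := t₁)
    show min t₀ t₁ - 1 ≤ max t₀ t₁ + 1
    linarith
  set c : ℝ → ℝ := fun t => min (max t a) b with hc
  have hrange : ∀ t, c t ∈ Set.Icc a b := by
    intro t
    constructor
    · exact le_min (le_max_right _ _) hab
    · exact min_le_right _ _
  have hceq : ∀ t ∈ Set.Icc a b, c t = t := by
    intro t ht
    simp [hc, max_eq_left ht.1, min_eq_left ht.2]
  obtain ⟨M, hM⟩ := (isCompact_Icc (a := a) (b := b)).exists_bound_of_continuousOn
    hA.continuousOn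
  have hM0 : 0 ≤ M := le_trans (norm_nonneg _) (hM a ⟨le_refl a, hab⟩)
  set v : ℝ → Mat n → Mat n := fun t x => x * A (c t) with hv
  have hlip : ∀ t, LipschitzWith M.toNNReal (v t) := by
    intro t
    apply LipschitzWith.of_dist_le_mul
    intro x y
    simp only [hv, dist_eq_norm]
    have : x * A (c t) - y * A (c t) = (x - y) * A (c t) := by noncomm_ring
    rw [this]
    calc ‖(x - y) * A (c t)‖ ≤ ‖x - y‖ * ‖A (c t)‖ := norm_mul_le _ _
      _ ≤ ‖x - y‖ * M := by
          exact mul_le_mul_of_nonneg_left (hM _ (hrange t)) (norm_nonneg _)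
      _ = ↑M.toNNReal * ‖x - y‖ := by rw [Real.coe_toNNReal _ hM0, mul_comm]
  have ht₀ : t₀ ∈ Set.Ioo a b := by
    refine ⟨?_, ?_⟩
    · have : min t₀ t₁ ≤ t₀ := min_le_left _ _
      show min t₀ t₁ - 1 < t₀; linarith
    · have : t₀ ≤ max t₀ t₁ := le_max_left _ _
      show t₀ < max t₀ t₁ + 1; linarith
  have key : Set.EqOn f g (Set.Icc a b) := by
    apply ODE_solution_unique_of_mem_Icc (v := v) (s := fun _ => Set.univ)
      (fun t _ => (hlip t).lipschitzOnWith) ht₀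
    · exact fun t _ => ((hf t).differentiableAt.continuousAt).continuousWithinAt
    · intro t ht
      have := hf t
      rwa [show f t * A t = v t (f t) by rw [hv]; simp [hceq t (Set.mem_Icc_of_Ioo ht)]] at this
    · exact fun _ _ => Set.mem_univ _
    · exact fun t _ => ((hg t).differentiableAt.continuousAt).continuousWithinAt
    · intro t ht
      have := hg t
      rwa [show g t * A t = v t (g t) by rw [hv]; simp [hceq t (Set.mem_Icc_of_Ioo ht)]] at this
    · exact fun _ _ => Set.mem_univ _
    · exact h
  refine key ⟨?_, ?_⟩
  · have : min t₀ t₁ ≤ t₁ := min_le_right _ _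
    show min t₀ t₁ - 1 ≤ t₁; linarith
  · have : t₁ ≤ max t₀ t₁ := le_max_right _ _
    show t₁ ≤ max t₀ t₁ + 1; linarith

/-- if `k ∈ GLₙ(ℝ)` commutes with the holonomy `u (2π)` of a continuous
`2π`-periodic loop `ξ` at level `λ ≠ 0`, then `g t := (u t)⁻¹ * k * u t` is a C¹,
`2π`-periodic, `GLₙ(ℝ)`-valued gauge transformation with `g 0 = k` which fixes `ξ`
under the level-`λ` gauge action. -/
theorem centralizer_lifts_to_gauge_stabilizer (n : ℕ) (hn : 1 ≤ n)
    (lam : ℝ) (hlam : lam ≠ 0)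
    (ξ : ℝ → Mat n) (hξ : Continuous ξ) (hξper : Function.Periodic ξ (2 * π))
    (u : ℝ → Mat n) (hdiff : Differentiable ℝ u) (hu0 : u 0 = 1)
    (hode : ∀ t : ℝ, lam • deriv u t = u t * ξ t)
    (k : Mat n) (hk : IsUnit k) (hcomm : k * u (2 * π) = u (2 * π) * k) :
    ContDiff ℝ 1 (fun t => (u t)⁻¹ * k * u t) ∧
    Function.Periodic (fun t => (u t)⁻¹ * k * u t) (2 * π) ∧
    (∀ t : ℝ, IsUnit ((u t)⁻¹ * k * u t)) ∧
    (fun t => (u t)⁻¹ * k * u t) 0 = k ∧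
    (∀ t : ℝ,
      ((u t)⁻¹ * k * u t) * ξ t * ((u t)⁻¹ * k * u t)⁻¹
        - lam • (deriv (fun s => (u s)⁻¹ * k * u s) t * ((u t)⁻¹ * k * u t)⁻¹) = ξ t) := by
  have hu' : ∀ t, HasDerivAt u ((1/lam) • (u t * ξ t)) t := by
    intro t
    have h1 : HasDerivAt u (deriv u t) t := (hdiff t).hasDerivAt
    have h2 : deriv u t = (1/lam) • (u t * ξ t) := by
      rw [← hode t, smul_smul, one_div, inv_mul_cancel₀ hlam, one_smul]
    rwa [h2] at h1
  set A : ℝ → Mat n := fun t => (1/lam) • ξ t with hAdef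
  have hA : Continuous A := by rw [hAdef]; exact hξ.const_smul (1/lam)
  have hunit : ∀ t, IsUnit (u t) := by
    intro t₀
    by_contra h
    have hdet : (u t₀).det = 0 := by
      by_contra hd
      exact h ((Matrix.isUnit_iff_isUnit_det _).mpr (isUnit_iff_ne_zero.mpr hd))
    obtain ⟨v, hv0, hvm⟩ := Matrix.exists_vecMul_eq_zero_iff.mpr hdet
    set c : Mat n := Matrix.of (fun _ j => v j) with hcdef
    have hcu : c * u t₀ = 0 := by
      ext i j
      have hvj := congrFun hvm j
      simp only [Matrix.vecMul, dotProduct, Pi.zero_apply] at hvj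
      simp [hcdef, Matrix.mul_apply, hvj]
    have hfA : ∀ t, HasDerivAt (fun t => c * u t) ((c * u t) * A t) t := by
      intro t
      have h1 := (hu' t).const_mul c
      refine h1.congr_deriv (Eq.symm ?_)
      simp [hAdef, Matrix.mul_smul, mul_assoc]
    have hgA : ∀ t : ℝ, HasDerivAt (fun _ => (0 : Mat n)) ((0 : Mat n) * A t) t := by
      intro t
      rw [zero_mul]; exact hasDerivAt_const t (0 : Mat n)
    have h0 : (fun t => c * u t) t₀ = (fun _ => (0 : Mat n)) t₀ := hcu
    have hkey := lin_ode_unique A hA _ _ hfA hgA h0 0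
    simp only [hu0, mul_one] at hkey
    have hv' : v = 0 := by
      funext j
      have := congrFun (congrFun hkey ⟨0, hn⟩) j
      simpa [hcdef] using this
    exact hv0 hv'
  have hdet : ∀ t, IsUnit (u t).det := fun t => (Matrix.isUnit_iff_isUnit_det _).mp (hunit t)
  have hwu : ∀ t, (u t)⁻¹ * u t = 1 := fun t => Matrix.nonsing_inv_mul _ (hdet t)
  have hw : ∀ t, HasDerivAt (fun s => (u s)⁻¹) (-((1/lam) • (ξ t * (u t)⁻¹))) t := by
    intro t
    have hwR : (fun s : ℝ => (u s)⁻¹) = fun s => Ring.inverse (u s) :=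
      funext fun s => Matrix.nonsing_inv_eq_ringInverse _
    rw [hwR]
    have hF := hasFDerivAt_ringInverse (𝕜 := ℝ) (R := Mat n) (hunit t).unit
    rw [(hunit t).unit_spec] at hF
    have hcomp := hF.comp_hasDerivAt t (hu' t)
    have hcoe : (((hunit t).unit⁻¹ : (Mat n)ˣ) : Mat n) = (u t)⁻¹ := by
      rw [← Ring.inverse_unit, (hunit t).unit_spec, Matrix.nonsing_inv_eq_ringInverse]
    refine hcomp.congr_deriv (Eq.symm ?_)
    simp only [ContinuousLinearMap.neg_apply, ContinuousLinearMap.mulLeftRight_apply, hcoe,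
      Matrix.mul_smul, Matrix.smul_mul]
    rw [← mul_assoc, hwu t, one_mul]
  have hg' : ∀ t, HasDerivAt (fun s => (u s)⁻¹ * k * u s)
      ((-((1/lam) • (ξ t * (u t)⁻¹)) * k) * u t
        + ((u t)⁻¹ * k) * ((1/lam) • (u t * ξ t))) t :=
    fun t => ((hw t).mul_const k).mul (hu' t)
  have hgunit : ∀ t, IsUnit ((u t)⁻¹ * k * u t) := by
    intro t
    have h1 : IsUnit ((u t)⁻¹) := by
      apply (Matrix.isUnit_iff_isUnit_det _).mpr
      rw [Matrix.det_nonsing_inv, ← (hdet t).unit_spec, Ring.inverse_unit]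
      exact Units.isUnit _
    exact (h1.mul hk).mul (hunit t)
  refine ⟨?_, ?_, hgunit, ?_, ?_⟩
  · rw [contDiff_one_iff_deriv]
    refine ⟨fun t => (hg' t).differentiableAt, ?_⟩
    have hwcont : Continuous fun t : ℝ => (u t)⁻¹ :=
      Differentiable.continuous (fun t => (hw t).differentiableAt)
    have hder : deriv (fun s => (u s)⁻¹ * k * u s) = fun t =>
        (-((1/lam) • (ξ t * (u t)⁻¹)) * k) * u t
          + ((u t)⁻¹ * k) * ((1/lam) • (u t * ξ t)) := funext fun t => (hg' t).deriv
    erw [hder]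
    exact ((((hξ.mul hwcont).const_smul (1/lam)).neg.mul continuous_const).mul
      hdiff.continuous).add ((hwcont.mul continuous_const).mul
      ((hdiff.continuous.mul hξ).const_smul (1/lam)))
  · have hper : ∀ t, u (t + 2*π) = u (2*π) * u t := by
      intro t
      have hf : ∀ t : ℝ, HasDerivAt (fun s => u (s + 2*π))
          ((fun s => u (s + 2*π)) t * A t) t := by
        intro t
        have h1 := (hu' (t + 2*π)).comp_add_const t (2*π)
        refine h1.congr_deriv (Eq.symm ?_)
        simp only [hAdef]
        rw [Matrix.mul_smul, hξper t]
      have hg2 : ∀ t : ℝ, HasDerivAt (fun s => u (2*π) * u s)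
          ((fun s => u (2*π) * u s) t * A t) t := by
        intro t
        have h1 := (hu' t).const_mul (u (2*π))
        refine h1.congr_deriv (Eq.symm ?_)
        simp [hAdef, Matrix.mul_smul, mul_assoc]
      have h0 : (fun s => u (s + 2*π)) 0 = (fun s => u (2*π) * u s) 0 := by
        simp [hu0]
      exact lin_ode_unique A hA _ _ hf hg2 h0 t
    intro t
    show (u (t + 2*π))⁻¹ * k * u (t + 2*π) = (u t)⁻¹ * k * u t
    rw [hper t, Matrix.mul_inv_rev]
    have hstep : k * (u (2*π) * u t) = u (2*π) * (k * u t) := by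
      rw [← mul_assoc, hcomm, mul_assoc]
    calc (u t)⁻¹ * (u (2*π))⁻¹ * k * (u (2*π) * u t)
        = (u t)⁻¹ * ((u (2*π))⁻¹ * (k * (u (2*π) * u t))) := by simp [mul_assoc]
      _ = (u t)⁻¹ * (k * u t) := by
          rw [hstep, ← mul_assoc ((u (2*π))⁻¹), hwu (2*π), one_mul]
      _ = (u t)⁻¹ * k * u t := by rw [mul_assoc]
  · show (u 0)⁻¹ * k * u 0 = k
    rw [hu0, inv_one, one_mul, mul_one]
  · intro t
    have hGG : ((u t)⁻¹ * k * u t) * ((u t)⁻¹ * k * u t)⁻¹ = 1 :=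
      Matrix.mul_nonsing_inv _ ((Matrix.isUnit_iff_isUnit_det _).mp (hgunit t))
    erw [(hg' t).deriv]
    have hlam1 : lam * (1/lam) = 1 := by field_simp
    have hld : lam • ((-((1/lam) • (ξ t * (u t)⁻¹)) * k) * u t
        + ((u t)⁻¹ * k) * ((1/lam) • (u t * ξ t)))
        = ((u t)⁻¹ * k * u t) * ξ t - ξ t * ((u t)⁻¹ * k * u t) := by
      simp only [smul_add, Matrix.smul_mul, Matrix.mul_smul, smul_neg, smul_smul,
        hlam1, one_smul, neg_mul, mul_assoc]
      abel
    rw [← Matrix.smul_mul, hld, sub_mul, sub_sub_cancel, mul_assoc, hGG, mul_one]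
end
end

section
/- Let n ≥ 1 and λ ∈ ℝ with λ ≠ 0. Let ξ : ℝ → Mₙ(ℝ) be continuous and 2π-periodic, and let u : ℝ → Mₙ(ℝ) be differentiable with u(0) = 1 and λ·u′(t) = u(t)·ξ(t). Then a C¹ map η : ℝ → Mₙ(ℝ) satisfies λ·η′(t) + [ξ(t), η(t)] = 0 for all t (i.e. η lies in the kernel of the operator δ_{ξ/λ} : η ↦ η′ + (1/λ)[ξ,η]) if and only if η(t) = u(t)⁻¹·η(0)·u(t) for all t; and such an η is 2π-periodic if and only if η(0) commutes with the holonomy u(2π). (Thus the Lie algebra of the stabilizer of ξ under the affine coadjoint action, which equals ker δ_{ξ/λ}, is isomorphic via evaluation at 0 to the centralizer of Hol_λ(ξ).) -/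
open Real

noncomputable section

attribute [local instance] Matrix.linftyOpNormedRing Matrix.linftyOpNormedAlgebra

section AuxODE
open Set

/-- Uniqueness for the linear ODE `y' = y * A t`. -/
theorem ode_uniq {n : ℕ} (A : ℝ → Mat n) (hA : Continuous A)
    (f g : ℝ → Mat n) (hf : ∀ t, HasDerivAt f (f t * A t) t)
    (hg : ∀ t, HasDerivAt g (g t * A t) t) (t₀ : ℝ) (h0 : f t₀ = g t₀) :
    ∀ t, f t = g t := by
  intro t
  set b : ℝ := |t| + |t₀| + 1 with hbdef
  have hb : 0 < b := by positivity
  have ht0 : t₀ ∈ Ioo (-b) b := by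
    constructor <;> [nlinarith [neg_abs_le t₀, abs_nonneg t]; nlinarith [le_abs_self t₀, abs_nonneg t]]
  obtain ⟨C, hC⟩ := (isCompact_Icc (a := -b) (b := b)).exists_bound_of_continuousOn hA.continuousOn
  set K : ℝ := max C 0 with hKdef
  have hK0 : 0 ≤ K := le_max_right _ _
  set c : ℝ → ℝ := fun s => max (-b) (min s b) with hcdef
  have hcmem : ∀ s, c s ∈ Icc (-b) b := fun s =>
    ⟨le_max_left _ _, max_le (by linarith) (min_le_right _ _)⟩
  have hKA : ∀ s, ‖A (c s)‖ ≤ K := fun s => le_trans (hC _ (hcmem s)) (le_max_left _ _)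
  have hv : ∀ s, LipschitzOnWith K.toNNReal (fun x : Mat n => x * A (c s))
      ((fun _ => univ) s) := by
    intro s
    refine (LipschitzWith.of_dist_le_mul fun x y => ?_).lipschitzOnWith
    rw [dist_eq_norm, dist_eq_norm, ← sub_mul, Real.coe_toNNReal _ hK0]
    calc ‖(x - y) * A (c s)‖ ≤ ‖x - y‖ * ‖A (c s)‖ := norm_mul_le _ _
      _ ≤ K * ‖x - y‖ := by
        rw [mul_comm]
        exact mul_le_mul_of_nonneg_right (hKA s) (norm_nonneg _)
  have hceq : ∀ s ∈ Ioo (-b) b, c s = s := fun s hs => by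
    rw [hcdef]; dsimp only; rw [min_eq_left hs.2.le, max_eq_right hs.1.le]
  have key := ODE_solution_unique_of_mem_Icc (v := fun s x => x * A (c s))
    (s := fun _ => univ) (K := K.toNNReal) (fun s _ => hv s) ht0
    (fun s _ => (hf s).continuousAt.continuousWithinAt)
    (fun s hs => by show HasDerivAt f (f s * A (c s)) s; rw [hceq s hs]; exact hf s) (fun _ _ => mem_univ _)
    (fun s _ => (hg s).continuousAt.continuousWithinAt)
    (fun s hs => by show HasDerivAt g (g s * A (c s)) s; rw [hceq s hs]; exact hg s) (fun _ _ => mem_univ _) h0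
  exact key ⟨by nlinarith [neg_abs_le t, abs_nonneg t₀], by nlinarith [le_abs_self t, abs_nonneg t₀]⟩


/-- Every value of the fundamental solution is invertible. -/
theorem ode_unit {n : ℕ} (A : ℝ → Mat n) (hA : Continuous A)
    (u : ℝ → Mat n) (hu : ∀ t, HasDerivAt u (u t * A t) t) (hu0 : u 0 = 1) :
    ∀ T, IsUnit (u T) := by
  intro T
  have hzero : ∀ C : Mat n, C * u T = 0 → C = 0 := by
    intro C hC
    have hf : ∀ t, HasDerivAt (fun s => C * u s) ((C * u t) * A t) t := by
      intro t
      have := (hu t).const_mul C; rw [← mul_assoc] at this; exact this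
    have hg : ∀ t : ℝ, HasDerivAt (fun _ : ℝ => (0 : Mat n)) ((0 : Mat n) * A t) t := by
      intro t; rw [zero_mul]; exact hasDerivAt_const t (0 : Mat n)
    have := ode_uniq A hA _ _ hf hg T (by simpa using hC) 0
    simpa [hu0] using this
  have hker : LinearMap.ker (LinearMap.mulRight ℝ (u T)) = ⊥ :=
    LinearMap.ker_eq_bot'.mpr fun C hC => hzero C hC
  have hsurj := (LinearMap.injective_iff_surjective).mp (LinearMap.ker_eq_bot.mp hker)
  obtain ⟨V, hV⟩ := hsurj 1
  exact (Matrix.isUnit_iff_isUnit_det _).mpr (Matrix.isUnit_det_of_left_inverse (B := V) hV)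

end AuxODE

/-- a C¹ map `η` satisfies `λ • η' + [ξ, η] = 0` (i.e. lies in the kernel of
`δ_{ξ/λ}`) iff `η t = (u t)⁻¹ * η 0 * u t` for all `t`, where `u` is the fundamental solution
for `ξ` at level `λ`; and such an `η` is `2π`-periodic iff `η 0` commutes with the holonomy
`u (2π)`. -/
theorem kernel_of_covariant_derivative (n : ℕ) (hn : 1 ≤ n)
    (lam : ℝ) (hlam : lam ≠ 0)
    (ξ : ℝ → Mat n) (hξ : Continuous ξ) (hξper : Function.Periodic ξ (2 * π))
    (u : ℝ → Mat n) (hdiff : Differentiable ℝ u) (hu0 : u 0 = 1)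
    (hode : ∀ t : ℝ, lam • deriv u t = u t * ξ t)
    (η : ℝ → Mat n) (hη : ContDiff ℝ 1 η) :
    ((∀ t : ℝ, lam • deriv η t + (ξ t * η t - η t * ξ t) = 0) ↔
      (∀ t : ℝ, η t = (u t)⁻¹ * η 0 * u t)) ∧
    ((∀ t : ℝ, lam • deriv η t + (ξ t * η t - η t * ξ t) = 0) →
      (Function.Periodic η (2 * π) ↔ η 0 * u (2 * π) = u (2 * π) * η 0)) := by
  set A : ℝ → Mat n := fun t => lam⁻¹ • ξ t with hAdef
  have hA : Continuous A := hξ.const_smul lam⁻¹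
  have hu : ∀ t, HasDerivAt u (u t * A t) t := by
    intro t
    have h1 : HasDerivAt u (deriv u t) t := (hdiff t).hasDerivAt
    have h2 : deriv u t = u t * A t := by
      calc deriv u t = lam⁻¹ • (lam • deriv u t) := by
            rw [smul_smul, inv_mul_cancel₀ hlam, one_smul]
        _ = lam⁻¹ • (u t * ξ t) := by rw [hode t]
        _ = u t * A t := (mul_smul_comm _ _ _).symm
    rwa [h2] at h1
  have hunit : ∀ t, IsUnit (u t) := ode_unit A hA u hu hu0
  set v : ℝ → Mat n := fun t => Ring.inverse (u t) with hvdef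
  have hvu : ∀ t, v t * u t = 1 := fun t => Ring.inverse_mul_cancel _ (hunit t)
  have huv : ∀ t, u t * v t = 1 := fun t => Ring.mul_inverse_cancel _ (hunit t)
  have hinv : ∀ t, (u t)⁻¹ = v t := fun t => Matrix.nonsing_inv_eq_ringInverse _
  have hvdiff : Differentiable ℝ v := hdiff.inverse hunit
  have hvd : ∀ t, HasDerivAt v (-(A t * v t)) t := by
    intro t
    have h1 : HasDerivAt v (deriv v t) t := (hvdiff t).hasDerivAt
    have h2 := (hu t).mul h1
    have h3 : u * v = fun _ => (1 : Mat n) := funext fun s => huv s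
    rw [h3] at h2
    have h4 : u t * A t * v t + u t * deriv v t = 0 := h2.unique (hasDerivAt_const _ _)
    have h5 : u t * deriv v t = -(u t * A t * v t) := eq_neg_of_add_eq_zero_right h4
    have h6 : deriv v t = -(A t * v t) := by
      calc deriv v t = (v t * u t) * deriv v t := by rw [hvu t, one_mul]
        _ = v t * (u t * deriv v t) := mul_assoc _ _ _
        _ = v t * (-(u t * A t * v t)) := by rw [h5]
        _ = -(A t * v t) := by
            rw [mul_neg, ← mul_assoc, ← mul_assoc, hvu t, one_mul]
    rwa [h6] at h1
  -- kernel property of conjugated constants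
  have hwker : ∀ (C : Mat n) (t : ℝ),
      lam • deriv (fun s => v s * C * u s) t +
        (ξ t * (v t * C * u t) - (v t * C * u t) * ξ t) = 0 := by
    intro C t
    have hD : HasDerivAt (fun s => v s * C * u s) _ t := ((hvd t).mul_const C).mul (hu t)
    rw [show deriv (fun s => v s * C * u s) t = _ from hD.deriv]
    simp only [hAdef, neg_mul, smul_neg, smul_mul_assoc, mul_smul_comm, smul_add, smul_smul,
      mul_inv_cancel₀ hlam, one_smul, neg_smul]
    simp only [mul_assoc]
    abel
  -- forward direction
  have hηd : ∀ s, HasDerivAt η (deriv η s) s := fun s =>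
    ((hη.differentiable one_ne_zero) s).hasDerivAt
  have hfwd : (∀ t : ℝ, lam • deriv η t + (ξ t * η t - η t * ξ t) = 0) →
      ∀ t, η t = v t * η 0 * u t := by
    intro hker t
    have hderiv : ∀ s, deriv η s = lam⁻¹ • (η s * ξ s - ξ s * η s) := by
      intro s
      have h1 : lam • deriv η s = η s * ξ s - ξ s * η s := by
        have := eq_neg_of_add_eq_zero_left (hker s)
        rwa [neg_sub] at this
      calc deriv η s = lam⁻¹ • (lam • deriv η s) := by
            rw [smul_smul, inv_mul_cancel₀ hlam, one_smul]
        _ = lam⁻¹ • (η s * ξ s - ξ s * η s) := by rw [h1]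
    have hf : ∀ s, HasDerivAt (fun r => u r * η r) ((u s * η s) * A s) s := by
      intro s
      have h : HasDerivAt (fun r => u r * η r) _ s := (hu s).mul (hηd s)
      rw [hderiv s] at h
      convert h using 1
      simp only [hAdef, mul_smul_comm, smul_mul_assoc, smul_sub, smul_add, mul_sub, sub_mul]
      simp only [mul_assoc]
      abel
    have hg : ∀ s, HasDerivAt (fun r => η 0 * u r) ((η 0 * u s) * A s) s := by
      intro s; have := (hu s).const_mul (η 0); rw [← mul_assoc] at this; exact this
    have huη := ode_uniq A hA _ _ hf hg 0 (by simp [hu0]) t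
    calc η t = (v t * u t) * η t := by rw [hvu t, one_mul]
      _ = v t * (u t * η t) := mul_assoc _ _ _
      _ = v t * (η 0 * u t) := by rw [huη]
      _ = v t * η 0 * u t := (mul_assoc _ _ _).symm
  refine ⟨⟨fun hker t => by rw [hfwd hker t, hinv t], ?_⟩, ?_⟩
  · intro hform t
    have hfe : η = fun s => v s * η 0 * u s := funext fun s => by rw [hform s, hinv s]
    rw [hfe]
    exact hwker (η 0) t
  · intro hker
    have hform := hfwd hker
    constructor
    · intro hper
      have h1 : η (2 * π) = η 0 := by simpa using hper 0
      have h2 : v (2 * π) * η 0 * u (2 * π) = η 0 := by rw [← hform, h1]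
      have h3 := congrArg (fun M => u (2 * π) * M) h2
      simpa [← mul_assoc, huv (2 * π)] using h3
    · intro hcomm
      have htrans : ∀ t, u (t + 2 * π) = u (2 * π) * u t := by
        refine ode_uniq A hA _ _ ?_ ?_ 0 (by simp [hu0])
        · intro t
          have h := HasDerivAt.comp_add_const t (2 * π) (hu (t + 2 * π))
          have hAper : A (t + 2 * π) = A t := by simp [hAdef, hξper t]
          rwa [hAper] at h
        · intro t; have := (hu t).const_mul (u (2 * π)); rw [← mul_assoc] at this; exact this
      intro t
      rw [hform (t + 2 * π), hform t, htrans t]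
      have hv2 : v (t + 2 * π) = v t * v (2 * π) := by
        have hb : (v t * v (2 * π)) * u (t + 2 * π) = 1 := by
          rw [htrans t, mul_assoc, ← mul_assoc (v (2 * π)), hvu (2 * π), one_mul, hvu t]
        calc v (t + 2 * π) = (v t * v (2 * π)) * u (t + 2 * π) * v (t + 2 * π) := by
              rw [hb, one_mul]
          _ = (v t * v (2 * π)) * (u (t + 2 * π) * v (t + 2 * π)) := mul_assoc _ _ _
          _ = v t * v (2 * π) := by rw [huv, mul_one]
      rw [hv2]
      simp only [mul_assoc]
      congr 1
      rw [← mul_assoc (η 0), hcomm, mul_assoc, ← mul_assoc (v (2 * π)), hvu (2 * π), one_mul]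
end
end

section
/- Let n ≥ 1, λ ∈ ℝ with λ ≠ 0, and let μ, η ∈ Mₙ(ℝ) with [μ,η] = 0, and k ∈ GLₙ(ℝ). Define g : ℝ → GLₙ(ℝ) by g(t) = exp(−t·μ/λ)·k·exp(t·μ/λ). Then the level-λ gauge action of g on the constant map η is given by (g·η)(t) = exp(−t·μ/λ)·(k·(η−μ)·k⁻¹)·exp(t·μ/λ) + μ. In particular, if k·(η−μ)·k⁻¹ commutes with μ, then g·η is the constant loop Ad_k(η−μ) + μ. (This is the affine action (k,η) ↦ Ad_k(η−μ) + μ of the stabilizer group (LG)_σ on the slice, formula (10) of the paper.) -/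
open Real

noncomputable section

attribute [local instance] Matrix.linftyOpNormedRing Matrix.linftyOpNormedAlgebra

/-- for commuting `μ, η ∈ Mₙ(ℝ)` and `k ∈ GLₙ(ℝ)`, the loop
`g t = exp(−t•μ/λ) · k · exp(t•μ/λ)` acts on the constant loop `η` at level `λ` by
`(g·η)(t) = exp(−t•μ/λ) · (k(η−μ)k⁻¹) · exp(t•μ/λ) + μ`; in particular if `k(η−μ)k⁻¹`
commutes with `μ` then `g·η` is the constant loop `Ad_k(η−μ) + μ`. -/
theorem stabilizer_slice_action (n : ℕ) (hn : 1 ≤ n) (lam : ℝ) (hlam : lam ≠ 0)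
    (μ η : Mat n) (hcomm : μ * η = η * μ) (k : Mat n) (hk : IsUnit k) :
    (∀ t : ℝ,
      gaugeAct lam
        (fun s : ℝ => NormedSpace.exp (-((s / lam) • μ)) * k * NormedSpace.exp ((s / lam) • μ))
        (fun _ => η) t
      = NormedSpace.exp (-((t / lam) • μ)) * (k * (η - μ) * k⁻¹) * NormedSpace.exp ((t / lam) • μ)
          + μ) ∧
    ((k * (η - μ) * k⁻¹) * μ = μ * (k * (η - μ) * k⁻¹) →
      ∀ t : ℝ,
        gaugeAct lam
          (fun s : ℝ => NormedSpace.exp (-((s / lam) • μ)) * k * NormedSpace.exp ((s / lam) • μ))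
          (fun _ => η) t
        = k * (η - μ) * k⁻¹ + μ) := by
  set B : Mat n := lam⁻¹ • μ with hB
  have hrw : ∀ s : ℝ, -((s / lam) • μ) = s • (-B) := by
    intro s; rw [hB, smul_neg, smul_smul, div_eq_mul_inv]
  have hrw' : ∀ s : ℝ, (s / lam) • μ = s • B := by
    intro s; rw [hB, smul_smul, div_eq_mul_inv]
  have hgeq :
      (fun s : ℝ => NormedSpace.exp (-((s / lam) • μ)) * k * NormedSpace.exp ((s / lam) • μ))
        = fun s : ℝ => NormedSpace.exp (s • (-B)) * k * NormedSpace.exp (s • B) := by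
    funext s; rw [hrw, hrw']
  have hlamB : lam • B = μ := by
    rw [hB, smul_smul, mul_inv_cancel₀ hlam, one_smul]
  -- the two exponentials are mutually inverse
  have hEF : ∀ t : ℝ,
      NormedSpace.exp (t • B) * NormedSpace.exp (t • (-B)) = 1 := by
    intro t
    rw [smul_neg, ← Matrix.exp_add_of_commute _ _ ((Commute.refl (t • B)).neg_right),
      add_neg_cancel, NormedSpace.exp_zero]
  have hFE : ∀ t : ℝ,
      NormedSpace.exp (t • (-B)) * NormedSpace.exp (t • B) = 1 := by
    intro t
    rw [smul_neg, ← Matrix.exp_add_of_commute _ _ ((Commute.refl (t • B)).neg_left),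
      neg_add_cancel, NormedSpace.exp_zero]
  have hkd : IsUnit k.det := (Matrix.isUnit_iff_isUnit_det k).mp hk
  have hkk : k * k⁻¹ = 1 := Matrix.mul_nonsing_inv k hkd
  have key : ∀ t : ℝ,
      gaugeAct lam
        (fun s : ℝ => NormedSpace.exp (-((s / lam) • μ)) * k * NormedSpace.exp ((s / lam) • μ))
        (fun _ => η) t
      = NormedSpace.exp (t • (-B)) * (k * (η - μ) * k⁻¹) * NormedSpace.exp (t • B) + μ := by
    intro t
    set F : Mat n := NormedSpace.exp (t • (-B)) with hF
    set E : Mat n := NormedSpace.exp (t • B) with hE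
    have hEF' : E * F = 1 := hEF t
    have hFE' : F * E = 1 := hFE t
    have hEinv : E⁻¹ = F := Matrix.inv_eq_left_inv hFE'
    have hFinv : F⁻¹ = E := Matrix.inv_eq_left_inv hEF'
    have hginv : (F * k * E)⁻¹ = F * k⁻¹ * E := by
      rw [Matrix.mul_inv_rev, Matrix.mul_inv_rev, hEinv, hFinv, ← mul_assoc]
    have hηE : η * E = E * η := by
      have cμη : Commute μ η := hcomm
      have c1 : Commute η (t • B) := (cμη.symm.smul_right lam⁻¹).smul_right t
      exact (c1.exp_right).eq
    have hd : HasDerivAt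
        (fun s : ℝ => NormedSpace.exp (s • (-B)) * k * NormedSpace.exp (s • B))
        ((-B) * F * k * E + F * k * (B * E)) t := by
      have h1 := (hasDerivAt_exp_smul_const' (𝕂 := ℝ) (-B) t).mul_const k
      have h2 := hasDerivAt_exp_smul_const' (𝕂 := ℝ) B t
      exact h1.mul h2
    have e1 : ∀ x : Mat n, E * (F * x) = x := fun x => by rw [← mul_assoc, hEF', one_mul]
    have e3 : ∀ x : Mat n, k * (k⁻¹ * x) = x := fun x => by rw [← mul_assoc, hkk, one_mul]
    have c1 : ∀ x : Mat n, E * (η * x) = η * (E * x) := fun x => by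
      rw [← mul_assoc, ← hηE, mul_assoc]
    have hs2 : ∀ x y z : Mat n, lam • (x * (y * (B * z))) = x * (y * (μ * z)) := by
      intro x y z
      rw [← mul_smul_comm, ← mul_smul_comm, ← smul_mul_assoc, hlamB]
    rw [hgeq]
    simp only [gaugeAct]
    erw [hd.deriv]
    rw [← hE, ← hF, hginv]
    simp only [mul_assoc, add_mul, sub_mul, mul_sub, neg_mul, mul_neg, smul_add, smul_neg,
      e1, e3, c1, hs2, hlamB, hFE', mul_one, one_mul]
    abel
  refine ⟨fun t => by rw [hrw t, hrw' t]; exact key t, fun hA t => ?_⟩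
  rw [key t]
  have cAE : Commute (k * (η - μ) * k⁻¹) (NormedSpace.exp (t • B)) := by
    have cA : Commute (k * (η - μ) * k⁻¹) μ := hA
    exact ((cA.smul_right lam⁻¹).smul_right t).exp_right
  rw [mul_assoc, cAE.eq, ← mul_assoc, ← mul_assoc]
  rw [show NormedSpace.exp (t • (-B)) * NormedSpace.exp (t • B) = 1 from hFE t, one_mul]
end
end

section
/- Let n ≥ 1 and ξ ∈ Mₙ(ℝ), and set f(t) := exp(−t·ξ). For a C¹ map g : ℝ → GLₙ(ℝ) define (f·g)(t) := f(t)·g(t)·f(t)⁻¹, and for a C¹ map η : ℝ → Mₙ(ℝ) define (f·η)(t) := f(t)·η(t)·f(t)⁻¹ + ξ. Then f·(g·η) = (f·g)·(f·η), where g·η denotes the level-1 gauge action (g·η)(t) = g(t)·η(t)·g(t)⁻¹ − g′(t)·g(t)⁻¹. Moreover, if g and η are 2π-periodic and exp(2π·ξ) commutes with g(t) and with η(t) for every t, then f·g and f·η are 2π-periodic. (Compatibility of the exterior automorphisms of LG and of L𝔤 associated to a vertex of the alcove exponentiating to a central element.) -/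
open Real

noncomputable section

attribute [local instance] Matrix.linftyOpNormedRing Matrix.linftyOpNormedAlgebra

/-- for `ξ ∈ Mₙ(ℝ)` and `f t = exp(−t•ξ)`, the twists
`(f·g)(t) = f t · g t · (f t)⁻¹` and `(f·η)(t) = f t · η t · (f t)⁻¹ + ξ` are compatible with
the level-1 gauge action: `f·(g·η) = (f·g)·(f·η)`.  Moreover if `g` and `η` are `2π`-periodic
and `exp(2π•ξ)` commutes with all values of `g` and `η`, then `f·g` and `f·η` are
`2π`-periodic. -/
theorem exterior_automorphism_compatible (n : ℕ) (hn : 1 ≤ n) (ξ : Mat n)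
    (g : ℝ → Mat n) (hg : ContDiff ℝ 1 g) (hgu : ∀ t : ℝ, IsUnit (g t))
    (η : ℝ → Mat n) (hη : ContDiff ℝ 1 η) :
    ((fun t : ℝ => NormedSpace.exp (-(t • ξ)) * gaugeAct 1 g η t
          * (NormedSpace.exp (-(t • ξ)))⁻¹ + ξ)
      = gaugeAct 1
          (fun t : ℝ => NormedSpace.exp (-(t • ξ)) * g t * (NormedSpace.exp (-(t • ξ)))⁻¹)
          (fun t : ℝ => NormedSpace.exp (-(t • ξ)) * η t * (NormedSpace.exp (-(t • ξ)))⁻¹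
            + ξ)) ∧
    (Function.Periodic g (2 * π) → Function.Periodic η (2 * π) →
      (∀ t : ℝ, NormedSpace.exp ((2 * π) • ξ) * g t = g t * NormedSpace.exp ((2 * π) • ξ)) →
      (∀ t : ℝ, NormedSpace.exp ((2 * π) • ξ) * η t = η t * NormedSpace.exp ((2 * π) • ξ)) →
      Function.Periodic
        (fun t : ℝ => NormedSpace.exp (-(t • ξ)) * g t * (NormedSpace.exp (-(t • ξ)))⁻¹)
        (2 * π) ∧
      Function.Periodic
        (fun t : ℝ => NormedSpace.exp (-(t • ξ)) * η t * (NormedSpace.exp (-(t • ξ)))⁻¹ + ξ)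
        (2 * π)) := by
  -- basic facts about the exponentials
  have h1 : ∀ s : ℝ, NormedSpace.exp (-(s • ξ)) * NormedSpace.exp (s • ξ) = 1 := by
    intro s
    rw [← Matrix.exp_add_of_commute _ _ ((Commute.refl (s • ξ)).neg_left), neg_add_cancel,
      NormedSpace.exp_zero]
  have h2 : ∀ s : ℝ, NormedSpace.exp (s • ξ) * NormedSpace.exp (-(s • ξ)) = 1 := by
    intro s
    rw [← Matrix.exp_add_of_commute _ _ ((Commute.refl (s • ξ)).neg_right), add_neg_cancel,
      NormedSpace.exp_zero]
  have hinv : ∀ s : ℝ, (NormedSpace.exp (-(s • ξ)))⁻¹ = NormedSpace.exp (s • ξ) :=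
    fun s => Matrix.inv_eq_right_inv (h1 s)
  constructor
  · -- the equivariance identity
    have hgd : ∀ t : ℝ, HasDerivAt g (deriv g t) t := fun t =>
      ((hg.differentiable one_ne_zero) t).hasDerivAt
    have hFd : ∀ s : ℝ, HasDerivAt (fun u : ℝ => NormedSpace.exp (-(u • ξ)))
        (NormedSpace.exp (-(s • ξ)) * (-ξ)) s := by
      intro s
      have := hasDerivAt_exp_smul_const (𝕂 := ℝ) (-ξ) s
      simp only [smul_neg] at this
      exact this
    have hFid : ∀ s : ℝ, HasDerivAt (fun u : ℝ => NormedSpace.exp (u • ξ))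
        (ξ * NormedSpace.exp (s • ξ)) s := fun s => hasDerivAt_exp_smul_const' ξ s
    funext t
    simp only [gaugeAct, hinv]
    -- derivative of the twisted loop
    have hGd : HasDerivAt
        (fun s : ℝ => NormedSpace.exp (-(s • ξ)) * g s * NormedSpace.exp (s • ξ))
        ((NormedSpace.exp (-(t • ξ)) * (-ξ) * g t
            + NormedSpace.exp (-(t • ξ)) * deriv g t) * NormedSpace.exp (t • ξ)
          + NormedSpace.exp (-(t • ξ)) * g t * (ξ * NormedSpace.exp (t • ξ))) t :=
      ((hFd t).mul (hgd t)).mul (hFid t)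
    erw [hGd.deriv]
    -- inverse of the twisted loop
    have hdet : IsUnit (g t).det := (Matrix.isUnit_iff_isUnit_det _).mp (hgu t)
    have huv : g t * (g t)⁻¹ = 1 := Matrix.mul_nonsing_inv _ hdet
    have hvu : (g t)⁻¹ * g t = 1 := Matrix.nonsing_inv_mul _ hdet
    have hGinv : (NormedSpace.exp (-(t • ξ)) * g t * NormedSpace.exp (t • ξ))⁻¹
        = NormedSpace.exp (-(t • ξ)) * (g t)⁻¹ * NormedSpace.exp (t • ξ) := by
      apply Matrix.inv_eq_right_inv
      calc NormedSpace.exp (-(t • ξ)) * g t * NormedSpace.exp (t • ξ)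
            * (NormedSpace.exp (-(t • ξ)) * (g t)⁻¹ * NormedSpace.exp (t • ξ))
          = NormedSpace.exp (-(t • ξ)) * (g t
              * ((NormedSpace.exp (t • ξ) * NormedSpace.exp (-(t • ξ)))
                * ((g t)⁻¹ * NormedSpace.exp (t • ξ)))) := by
            simp only [mul_assoc]
        _ = 1 := by rw [h2 t, one_mul, ← mul_assoc (g t), huv, one_mul, h1 t]
    rw [hGinv]
    -- now pure (noncommutative) algebra with the cancellation rules
    set a : Mat n := NormedSpace.exp (-(t • ξ)) with ha
    set b : Mat n := NormedSpace.exp (t • ξ) with hb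
    have hab : a * b = 1 := h1 t
    have hba : b * a = 1 := h2 t
    have habx : ∀ x : Mat n, a * (b * x) = x := fun x => by rw [← mul_assoc, hab, one_mul]
    have hbax : ∀ x : Mat n, b * (a * x) = x := fun x => by rw [← mul_assoc, hba, one_mul]
    have huvx : ∀ x : Mat n, g t * ((g t)⁻¹ * x) = x := fun x => by
      rw [← mul_assoc, huv, one_mul]
    have hvux : ∀ x : Mat n, (g t)⁻¹ * (g t * x) = x := fun x => by
      rw [← mul_assoc, hvu, one_mul]
    have hxa : ξ * a = a * ξ :=
      ((((Commute.refl ξ).smul_right t).neg_right).exp_right).eq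
    have hxb : ξ * b = b * ξ := (((Commute.refl ξ).smul_right t).exp_right).eq
    have hxax : ∀ x : Mat n, ξ * (a * x) = a * (ξ * x) := fun x => by
      rw [← mul_assoc, hxa, mul_assoc]
    have hxbx : ∀ x : Mat n, ξ * (b * x) = b * (ξ * x) := fun x => by
      rw [← mul_assoc, hxb, mul_assoc]
    simp only [one_smul, mul_add, add_mul, mul_sub, sub_mul, neg_mul, mul_neg, mul_assoc,
      habx, hbax, hab, hba, huvx, hvux, huv, hvu, hxax, hxbx, hxa, hxb, mul_one, one_mul]
    abel
  · -- periodicity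
    intro hpg hpη hcg hcη
    have hcomm : ∀ s : ℝ, Commute (s • ξ) ((2 * π) • ξ) :=
      fun s => ((Commute.refl ξ).smul_left s).smul_right (2 * π)
    have hFadd : ∀ s : ℝ, NormedSpace.exp (-((s + 2 * π) • ξ))
        = NormedSpace.exp (-(s • ξ)) * NormedSpace.exp (-((2 * π) • ξ)) := by
      intro s
      rw [add_smul, neg_add, Matrix.exp_add_of_commute _ _ ((hcomm s).neg_left.neg_right)]
    have hFiadd : ∀ s : ℝ, NormedSpace.exp ((s + 2 * π) • ξ)
        = NormedSpace.exp (s • ξ) * NormedSpace.exp ((2 * π) • ξ) := by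
      intro s
      rw [add_smul, Matrix.exp_add_of_commute _ _ (hcomm s)]
    set E : Mat n := NormedSpace.exp ((2 * π) • ξ) with hE
    set E' : Mat n := NormedSpace.exp (-((2 * π) • ξ)) with hE'
    have hE'E : E' * E = 1 := h1 (2 * π)
    have hEE' : E * E' = 1 := h2 (2 * π)
    have hE'Ex : ∀ x : Mat n, E' * (E * x) = x := fun x => by rw [← mul_assoc, hE'E, one_mul]
    -- E' commutes with any matrix that commutes with E
    have key : ∀ m : Mat n, E * m = m * E → E' * m = m * E' := by
      intro m hm
      have h3 : E' * m * E = m := by rw [mul_assoc, ← hm, ← mul_assoc, hE'E, one_mul]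
      calc E' * m = E' * m * E * E' := by rw [mul_assoc, hEE', mul_one]
        _ = m * E' := by rw [h3]
    have hE'Fi : ∀ s : ℝ, E' * NormedSpace.exp (s • ξ) = NormedSpace.exp (s • ξ) * E' :=
      fun s => ((((hcomm s).neg_right).exp).symm).eq
    constructor
    · intro t
      have hE'g : E' * g t = g t * E' := key (g t) (hcg t)
      simp only [hinv]
      rw [hFadd t, hFiadd t, hpg t]
      calc NormedSpace.exp (-(t • ξ)) * E' * g t * (NormedSpace.exp (t • ξ) * E)
          = NormedSpace.exp (-(t • ξ))
              * (E' * (g t * (NormedSpace.exp (t • ξ) * E))) := by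
            simp only [mul_assoc]
        _ = NormedSpace.exp (-(t • ξ))
              * (g t * (NormedSpace.exp (t • ξ) * (E' * E))) := by
            rw [← mul_assoc E', hE'g, mul_assoc, ← mul_assoc E', hE'Fi t, mul_assoc]
        _ = NormedSpace.exp (-(t • ξ)) * g t * NormedSpace.exp (t • ξ) := by
            rw [hE'E, mul_one, ← mul_assoc]
    · intro t
      have hE'η : E' * η t = η t * E' := key (η t) (hcη t)
      simp only [hinv]
      rw [hFadd t, hFiadd t, hpη t]
      congr 1
      calc NormedSpace.exp (-(t • ξ)) * E' * η t * (NormedSpace.exp (t • ξ) * E)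
          = NormedSpace.exp (-(t • ξ))
              * (E' * (η t * (NormedSpace.exp (t • ξ) * E))) := by
            simp only [mul_assoc]
        _ = NormedSpace.exp (-(t • ξ))
              * (η t * (NormedSpace.exp (t • ξ) * (E' * E))) := by
            rw [← mul_assoc E', hE'η, mul_assoc, ← mul_assoc E', hE'Fi t, mul_assoc]
        _ = NormedSpace.exp (-(t • ξ)) * η t * NormedSpace.exp (t • ξ) := by
            rw [hE'E, mul_one, ← mul_assoc]
end
end

section
/- Let n ≥ 1 and λ ∈ ℝ with λ ≠ 0, and let g ≥ 0, b ≥ 1 be integers. Let a₁,…,a_{2g} ∈ GLₙ(ℝ), let c₁,…,c_b ∈ GLₙ(ℝ), let ξ₁,…,ξ_b : ℝ → Mₙ(ℝ) be continuous 2π-periodic maps, and let h₁,…,h_b : ℝ → GLₙ(ℝ) be C¹ 2π-periodic maps. Suppose the relation ∏_{i=1}^{g} [a_{2i−1}, a_{2i}] = ∏_{j=1}^{b} c_j · Hol_λ(ξ_j) · c_j⁻¹ holds (ordered products, commutators [a,b] = a·b·a⁻¹·b⁻¹). Define a′_i := h₁(0)·a_i·h₁(0)⁻¹, c′_j := h₁(0)·c_j·h_j(0)⁻¹,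 and ξ′_j := h_j·ξ_j (level-λ gauge action). Then ∏_{i=1}^{g} [a′_{2i−1}, a′_{2i}] = ∏_{j=1}^{b} c′_j · Hol_λ(ξ′_j) · c′_j⁻¹. (The holonomy relation defining the moduli space of flat connections on a genus-g surface with b boundary components is preserved by the loop group action of the paper's holonomy description, Theorem 3.6.) -/
open Real

noncomputable section

attribute [local instance] Matrix.linftyOpNormedRing Matrix.linftyOpNormedAlgebra

/-- The group commutator `[a,b] = a b a⁻¹ b⁻¹` of two matrices. -/
def matComm {n : ℕ} (a b : Mat n) : Mat n := a * b * a⁻¹ * b⁻¹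

/-- `IsFundSol lam ξ u` says that `u` is a fundamental solution of the holonomy ODE
`λ • u' = u · ξ`, `u 0 = 1`; the holonomy `Hol_λ(ξ)` is then `u (2π)`. -/
def IsFundSol {n : ℕ} (lam : ℝ) (ξ : ℝ → Mat n) (u : ℝ → Mat n) : Prop :=
  Differentiable ℝ u ∧ u 0 = 1 ∧ ∀ t : ℝ, lam • deriv u t = u t * ξ t

section Aux

open Set in
/-- Uniqueness of solutions of the linear ODE `λ • y' = y · ξ` at time `2π`. -/
lemma sol_unique {n : ℕ} {lam : ℝ} (hlam : lam ≠ 0) {ξ y z : ℝ → Mat n}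
    (hξ : Continuous ξ) (hy : Differentiable ℝ y) (hz : Differentiable ℝ z)
    (hy' : ∀ t, lam • deriv y t = y t * ξ t) (hz' : ∀ t, lam • deriv z t = z t * ξ t)
    (h0 : y 0 = z 0) : y (2 * π) = z (2 * π) := by
  have h2π : (0 : ℝ) ≤ 2 * π := by positivity
  obtain ⟨M, hM⟩ := (isCompact_Icc (a := (0:ℝ)) (b := 2 * π)).exists_bound_of_continuousOn
    hξ.continuousOn
  set Mp : ℝ := max M 0 with hMp
  have hMp0 : 0 ≤ Mp := le_max_right _ _
  set K : NNReal := ⟨|lam|⁻¹ * Mp, by positivity⟩ with hK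
  set τ : ℝ → ℝ := fun t => max 0 (min t (2 * π)) with hτ
  have hτmem : ∀ t, τ t ∈ Icc (0:ℝ) (2 * π) := fun t =>
    ⟨le_max_left _ _, max_le (by positivity) (min_le_right _ _)⟩
  have hτeq : ∀ t ∈ Ico (0:ℝ) (2 * π), τ t = t := by
    intro t ht
    rw [hτ]; dsimp only
    rw [min_eq_left ht.2.le, max_eq_right ht.1]
  set V : ℝ → Mat n → Mat n := fun t w => lam⁻¹ • (w * ξ (τ t)) with hV
  have hlip : ∀ t : ℝ, LipschitzOnWith K (V t) (univ : Set (Mat n)) := by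
    intro t
    apply LipschitzWith.lipschitzOnWith
    apply LipschitzWith.of_dist_le_mul
    intro x w
    simp only [hV, dist_eq_norm]
    rw [← smul_sub, ← sub_mul]
    have hbound : ‖ξ (τ t)‖ ≤ Mp := le_trans (hM _ (hτmem t)) (le_max_left _ _)
    calc ‖lam⁻¹ • ((x - w) * ξ (τ t))‖ = |lam⁻¹| * ‖(x - w) * ξ (τ t)‖ := by
          rw [norm_smul, Real.norm_eq_abs]
      _ ≤ |lam⁻¹| * (‖x - w‖ * ‖ξ (τ t)‖) := by
          gcongr; exact norm_mul_le _ _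
      _ ≤ |lam⁻¹| * (‖x - w‖ * Mp) := by
          gcongr
      _ = (K : ℝ) * ‖x - w‖ := by
          rw [hK]; change _ = (|lam|⁻¹ * Mp) * ‖x - w‖; rw [abs_inv]; ring
  have hderiv : ∀ (f : ℝ → Mat n), Differentiable ℝ f → (∀ t, lam • deriv f t = f t * ξ t) →
      ∀ t ∈ Ico (0:ℝ) (2 * π), HasDerivWithinAt f (V t (f t)) (Ici t) t := by
    intro f hf hf' t ht
    have hd : deriv f t = V t (f t) := by
      rw [hV]; dsimp only; rw [hτeq t ht, ← hf' t, inv_smul_smul₀ hlam]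
    rw [← hd]
    exact (hf t).hasDerivAt.hasDerivWithinAt
  exact ODE_solution_unique_of_mem_Icc_right (fun t _ => hlip t) hy.continuous.continuousOn
    (hderiv y hy hy') (fun _ _ => mem_univ _) hz.continuous.continuousOn
    (hderiv z hz hz') (fun _ _ => mem_univ _) h0 ⟨h2π, le_refl _⟩

lemma conj_list_prod {n : ℕ} {H : Mat n} (hH : IsUnit H) (l : List (Mat n)) :
    (l.map fun x => H * x * H⁻¹).prod = H * l.prod * H⁻¹ := by
  have hdet : IsUnit H.det := (Matrix.isUnit_iff_isUnit_det H).mp hH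
  have h1 : ∀ X : Mat n, H⁻¹ * (H * X) = X := fun X => by
    rw [← mul_assoc, Matrix.nonsing_inv_mul H hdet, one_mul]
  induction l with
  | nil => simp [Matrix.mul_nonsing_inv H hdet]
  | cons x xs ih =>
    simp only [List.map_cons, List.prod_cons, ih]
    simp [mul_assoc, h1]

lemma conj_matComm {n : ℕ} {H : Mat n} (hH : IsUnit H) (x y : Mat n) :
    matComm (H * x * H⁻¹) (H * y * H⁻¹) = H * matComm x y * H⁻¹ := by
  have hdet : IsUnit H.det := (Matrix.isUnit_iff_isUnit_det H).mp hH
  have h1 : ∀ X : Mat n, H⁻¹ * (H * X) = X := fun X => by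
    rw [← mul_assoc, Matrix.nonsing_inv_mul H hdet, one_mul]
  have h2 : (H⁻¹)⁻¹ = H := Matrix.nonsing_inv_nonsing_inv H hdet
  simp [matComm, Matrix.mul_inv_rev, h2, mul_assoc, h1]

end Aux

/-- the holonomy relation
`∏_{i<g} [a_{2i}, a_{2i+1}] = ∏_{j<b} c_j · Hol_λ(ξ_j) · c_j⁻¹`
defining the moduli space of flat connections on a genus-`g` surface with `b ≥ 1` boundary
components is preserved by the loop group action
`a_i ↦ h_0(0) a_i h_0(0)⁻¹`, `c_j ↦ h_0(0) c_j h_j(0)⁻¹`, `ξ_j ↦ h_j · ξ_j` (level-`λ`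
gauge action).  Here `u j` and `v j` are fundamental solutions for `ξ j` and `h j · ξ j`,
so that `Hol_λ(ξ_j) = u j (2π)` and `Hol_λ(h_j · ξ_j) = v j (2π)`. -/
theorem holonomy_relation_equivariant (n : ℕ) (hn : 1 ≤ n) (lam : ℝ) (hlam : lam ≠ 0)
    (g b : ℕ) (hb : 1 ≤ b)
    (a : ℕ → Mat n) (ha : ∀ i, IsUnit (a i))
    (c : ℕ → Mat n) (hc : ∀ j, IsUnit (c j))
    (ξ : ℕ → ℝ → Mat n) (hξ : ∀ j, Continuous (ξ j))
    (hξper : ∀ j, Function.Periodic (ξ j) (2 * π))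
    (h : ℕ → ℝ → Mat n) (hh : ∀ j, ContDiff ℝ 1 (h j))
    (hhper : ∀ j, Function.Periodic (h j) (2 * π))
    (hhu : ∀ j, ∀ t : ℝ, IsUnit (h j t))
    (u : ℕ → ℝ → Mat n) (hu : ∀ j, IsFundSol lam (ξ j) (u j))
    (v : ℕ → ℝ → Mat n) (hv : ∀ j, IsFundSol lam (gaugeAct lam (h j) (ξ j)) (v j))
    (hrel : ((List.range g).map fun i => matComm (a (2 * i)) (a (2 * i + 1))).prod
      = ((List.range b).map fun j => c j * u j (2 * π) * (c j)⁻¹).prod) :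
    ((List.range g).map fun i =>
        matComm (h 0 0 * a (2 * i) * (h 0 0)⁻¹) (h 0 0 * a (2 * i + 1) * (h 0 0)⁻¹)).prod
      = ((List.range b).map fun j =>
          (h 0 0 * c j * (h j 0)⁻¹) * v j (2 * π) * (h 0 0 * c j * (h j 0)⁻¹)⁻¹).prod := by
  -- notation
  set H : Mat n := h 0 0 with hH
  have hHu : IsUnit H := hhu 0 0
  -- key: v j (2π) = h j 0 * u j (2π) * (h j 0)⁻¹
  have key : ∀ j, v j (2 * π) = h j 0 * u j (2 * π) * (h j 0)⁻¹ := by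
    intro j
    obtain ⟨hud, hu0, hue⟩ := hu j
    obtain ⟨hvd, hv0, hve⟩ := hv j
    have hhd : Differentiable ℝ (h j) := (hh j).differentiable one_ne_zero
    have hjdet : ∀ t, IsUnit (h j t).det := fun t =>
      (Matrix.isUnit_iff_isUnit_det _).mp (hhu j t)
    have hinv : ∀ t, (h j t)⁻¹ * h j t = 1 := fun t => Matrix.nonsing_inv_mul _ (hjdet t)
    set z : ℝ → Mat n := fun t => v j t * h j t with hz
    set w : ℝ → Mat n := fun t => h j 0 * u j t with hw
    have hzd : Differentiable ℝ z := hvd.mul hhd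
    have hwd : Differentiable ℝ w := hud.const_mul _
    have hz' : ∀ t, lam • deriv z t = z t * ξ j t := by
      intro t
      have hd : HasDerivAt z (deriv (v j) t * h j t + v j t * deriv (h j) t) t :=
        ((hvd t).hasDerivAt.mul (hhd t).hasDerivAt)
      have hinv' : ∀ X : Mat n, (h j t)⁻¹ * (h j t * X) = X := fun X => by
        rw [← mul_assoc, hinv t, one_mul]
      rw [show deriv z t = _ from hd.deriv, smul_add, ← smul_mul_assoc, hve t]
      simp only [gaugeAct, hz, mul_sub, sub_mul, mul_smul_comm, smul_mul_assoc]
      simp [mul_assoc, hinv t, hinv', mul_smul_comm]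
    have hw' : ∀ t, lam • deriv w t = w t * ξ j t := by
      intro t
      have hd : HasDerivAt w (h j 0 * deriv (u j) t) t :=
        (hud t).hasDerivAt.const_mul (h j 0)
      rw [show deriv w t = _ from hd.deriv, ← mul_smul_comm, hue t, hw, mul_assoc]
    have h00 : z 0 = w 0 := by simp [hz, hw, hv0, hu0]
    have heq : z (2 * π) = w (2 * π) :=
      sol_unique hlam (hξ j) hzd hwd hz' hw' h00
    have hper : h j (2 * π) = h j 0 := by simpa using hhper j 0
    have : v j (2 * π) * h j 0 = h j 0 * u j (2 * π) := by
      have := heq; simp only [hz, hw, hper] at this; exact this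
    calc v j (2 * π) = v j (2 * π) * h j 0 * (h j 0)⁻¹ := by
          rw [mul_assoc, Matrix.mul_nonsing_inv _ (hjdet 0), mul_one]
      _ = h j 0 * u j (2 * π) * (h j 0)⁻¹ := by rw [this]
  -- rewrite both sides as conjugates by H
  have hHdet : IsUnit H.det := (Matrix.isUnit_iff_isUnit_det H).mp hHu
  have hH1 : ∀ X : Mat n, H⁻¹ * (H * X) = X := fun X => by
    rw [← mul_assoc, Matrix.nonsing_inv_mul H hHdet, one_mul]
  have hHinv : (H⁻¹)⁻¹ = H := Matrix.nonsing_inv_nonsing_inv H hHdet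
  have lhs_eq : ((List.range g).map fun i =>
        matComm (H * a (2 * i) * H⁻¹) (H * a (2 * i + 1) * H⁻¹)).prod
      = H * ((List.range g).map fun i => matComm (a (2 * i)) (a (2 * i + 1))).prod * H⁻¹ := by
    rw [← conj_list_prod hHu, List.map_map]
    congr 1
    apply List.map_congr_left
    intro i _
    exact conj_matComm hHu _ _
  have rhs_eq : ((List.range b).map fun j =>
        (H * c j * (h j 0)⁻¹) * v j (2 * π) * (H * c j * (h j 0)⁻¹)⁻¹).prod
      = H * ((List.range b).map fun j => c j * u j (2 * π) * (c j)⁻¹).prod * H⁻¹ := by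
    rw [← conj_list_prod hHu, List.map_map]
    congr 1
    apply List.map_congr_left
    intro j _
    have hjdet : IsUnit (h j 0).det := (Matrix.isUnit_iff_isUnit_det _).mp (hhu j 0)
    have hj1 : ∀ X : Mat n, (h j 0)⁻¹ * (h j 0 * X) = X := fun X => by
      rw [← mul_assoc, Matrix.nonsing_inv_mul _ hjdet, one_mul]
    have hjinv : ((h j 0)⁻¹)⁻¹ = h j 0 := Matrix.nonsing_inv_nonsing_inv _ hjdet
    simp only [key j, Matrix.mul_inv_rev, hjinv, hHinv]
    simp [mul_assoc, hH1, hj1]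
  rw [lhs_eq, rhs_eq, hrel]
end
end

section
/- Let E be a finite-dimensional real normed vector space and S ⊆ E a closed, connected subset that is locally convex in the sense that every point x ∈ S has an open neighborhood U in E such that S ∩ U is convex. Then S is convex. -/
set_option maxHeartbeats 1000000

open Metric Set

lemma aux_feas (h θ τ ℓ lA lB lam capA capB b : ℝ)
    (hh0 : 0 < h) (hh4 : h ≤ 1/4)
    (hθ : θ = 1 - 4*h^2/9)
    (hτ0 : 0 < τ) (hτ1 : τ ≤ 1)
    (hl0 : 0 < ℓ) (hl1 : ℓ < 1)
    (hb0 : 0 < b) (hb : b ≤ ℓ - θ*τ*(2 + ℓ - ℓ^2))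
    (hlA : lA = max (ℓ - h) 0) (hlB : lB = min (ℓ + h) 1)
    (hlam : lam = (lB - ℓ)/(lB - lA))
    (hcapA : capA = max (lA - τ*(2 + lA - lA^2)) 0)
    (hcapB : capB = if (1:ℝ) ≤ ℓ + h then 1 else max (lB - τ*(2 + lB - lB^2)) 0) :
    b ≤ lam * capA + (1 - lam) * capB := by
  have hφl2 : 2 ≤ 2 + ℓ - ℓ^2 := by nlinarith only [mul_nonneg hl0.le (by linarith : (0:ℝ) ≤ 1 - ℓ)]
  have hφl94 : 2 + ℓ - ℓ^2 ≤ 9/4 := by nlinarith only [sq_nonneg (ℓ - 1/2)]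
  have hθ36 : 35/36 ≤ θ := by
    rw [hθ]
    nlinarith only [mul_le_mul hh4 hh4 hh0.le (by norm_num : (0:ℝ) ≤ 1/4)]
  by_cases h3 : ℓ < h
  · -- case iii : ℓ < h
    have hlA0 : lA = 0 := by rw [hlA]; exact max_eq_right (by linarith)
    have hlB0 : lB = ℓ + h := by rw [hlB]; exact min_eq_left (by linarith)
    have hif : ¬ (1:ℝ) ≤ ℓ + h := by push_neg; linarith
    rw [hcapB, if_neg hif, hlB0]
    have hden : 0 < ℓ + h := by linarith
    have hlamv : lam = h / (ℓ + h) := by rw [hlam, hlA0, hlB0]; ring_nf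
    have hlam0 : 0 ≤ lam := by rw [hlamv]; positivity
    have hu : (1 - lam) * (ℓ + h) = ℓ := by
      rw [hlamv]; field_simp; ring
    have hu0 : 0 ≤ 1 - lam := by
      rw [hlamv]
      have : h / (ℓ + h) ≤ 1 := div_le_one_of_le₀ (by linarith) hden.le
      linarith
    have hu12 : 1 - lam ≤ 1/2 := by
      have he : 1 - lam = ℓ / (ℓ + h) := by rw [hlamv]; field_simp; ring
      rw [he, div_le_iff₀ hden]; linarith
    have hφz2 : 0 ≤ 2 + (ℓ+h) - (ℓ+h)^2 := by
      nlinarith only [hden.le, hh4, h3, hl0]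
    have hφz94 : 2 + (ℓ+h) - (ℓ+h)^2 ≤ 9/4 := by nlinarith only [sq_nonneg (ℓ + h - 1/2)]
    have hcapA0 : 0 ≤ capA := by rw [hcapA]; exact le_max_right _ _
    have hkey : (1 - lam) * (2 + (ℓ+h) - (ℓ+h)^2) ≤ θ * (2 + ℓ - ℓ^2) := by
      nlinarith only [mul_le_mul hu12 hφz94 hφz2 (by norm_num : (0:ℝ) ≤ 1/2),
        mul_le_mul hθ36 hφl2 (by norm_num) (by linarith), hθ36, hφl2]
    have hp : τ * ((1 - lam) * (2 + (ℓ+h) - (ℓ+h)^2)) ≤ τ * (θ * (2 + ℓ - ℓ^2)) :=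
      mul_le_mul_of_nonneg_left hkey hτ0.le
    have hmain : b ≤ (1 - lam) * ((ℓ+h) - τ*(2 + (ℓ+h) - (ℓ+h)^2)) := by
      nlinarith only [hp, hu, hb]
    have hge : (ℓ+h) - τ*(2 + (ℓ+h) - (ℓ+h)^2) ≤ max ((ℓ+h) - τ*(2 + (ℓ+h) - (ℓ+h)^2)) 0 :=
      le_max_left _ _
    nlinarith only [hmain, hge, hu0, mul_nonneg hlam0 hcapA0,
      mul_le_mul_of_nonneg_left hge hu0]
  · push_neg at h3
    by_cases h2 : (1:ℝ) ≤ ℓ + h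
    · -- case ii : ℓ + h ≥ 1
      have hlAv : lA = ℓ - h := by rw [hlA]; exact max_eq_left (by linarith)
      have hlBv : lB = 1 := by rw [hlB]; exact min_eq_right (by linarith)
      rw [hcapB, if_pos h2]
      have hden : 0 < 1 - (ℓ - h) := by linarith
      have hlamval : lam * (1 - (ℓ - h)) = 1 - ℓ := by
        rw [hlam, hlAv, hlBv]; field_simp
      have hlam0 : 0 ≤ lam := by
        rw [hlam, hlAv, hlBv]
        exact div_nonneg (by linarith) (by linarith)
      have hlam12 : lam ≤ 1/2 := by
        rw [hlam, hlAv, hlBv, div_le_iff₀ (by linarith : (0:ℝ) < 1 - (ℓ - h))]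
        linarith
      have hφA2 : 0 ≤ 2 + (ℓ-h) - (ℓ-h)^2 := by
        nlinarith only [mul_nonneg (by linarith : (0:ℝ) ≤ ℓ - h) (by linarith : (0:ℝ) ≤ 1 - (ℓ - h))]
      have hφA94 : 2 + (ℓ-h) - (ℓ-h)^2 ≤ 9/4 := by nlinarith only [sq_nonneg (ℓ - h - 1/2)]
      have hkey : lam * (2 + (ℓ-h) - (ℓ-h)^2) ≤ θ * (2 + ℓ - ℓ^2) := by
        nlinarith only [mul_le_mul hlam12 hφA94 hφA2 (by norm_num : (0:ℝ) ≤ 1/2),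
          mul_le_mul hθ36 hφl2 (by norm_num) (by linarith)]
      have hp : τ * (lam * (2 + (ℓ-h) - (ℓ-h)^2)) ≤ τ * (θ * (2 + ℓ - ℓ^2)) :=
        mul_le_mul_of_nonneg_left hkey hτ0.le
      have hlin : lam * (ℓ - h) + (1 - lam) = ℓ := by nlinarith only [hlamval]
      have hcapAge : (ℓ - h) - τ*(2 + (ℓ-h) - (ℓ-h)^2) ≤ capA := by
        rw [hcapA, hlAv]; exact le_max_left _ _
      have hq : lam * ((ℓ - h) - τ*(2 + (ℓ-h) - (ℓ-h)^2)) ≤ lam * capA :=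
        mul_le_mul_of_nonneg_left hcapAge hlam0
      nlinarith only [hp, hlin, hq, hb]
    · -- case i : h ≤ ℓ, ℓ + h < 1
      push_neg at h2
      have hlAv : lA = ℓ - h := by rw [hlA]; exact max_eq_left (by linarith)
      have hlBv : lB = ℓ + h := by rw [hlB]; exact min_eq_left (by linarith)
      rw [hcapB, if_neg (by push_neg; exact h2), hlBv]
      have hlamv : lam = 1/2 := by
        rw [hlam, hlAv, hlBv, div_eq_iff (by nlinarith only [hh0] : (ℓ + h) - (ℓ - h) ≠ 0)]
        ring
      rw [hlamv]
      have hcapAge : (ℓ-h) - τ*(2 + (ℓ-h) - (ℓ-h)^2) ≤ capA := by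
        rw [hcapA, hlAv]; exact le_max_left _ _
      have hcapBge : (ℓ+h) - τ*(2 + (ℓ+h) - (ℓ+h)^2) ≤ max ((ℓ+h) - τ*(2 + (ℓ+h) - (ℓ+h)^2)) 0 :=
        le_max_left _ _
      have hkey : τ*(2+ℓ-ℓ^2) - τ*h^2 ≤ θ*(τ*(2+ℓ-ℓ^2)) := by
        rw [hθ]
        nlinarith only [mul_nonneg (mul_nonneg hτ0.le (sq_nonneg h))
          (by nlinarith only [sq_nonneg (ℓ - 1/2)] : (0:ℝ) ≤ 9 - 4*(2+ℓ-ℓ^2))]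
      nlinarith only [hcapAge, hcapBge, hb, hkey]

lemma aux_UL {E : Type*} [NormedAddCommGroup E] [NormedSpace ℝ E]
    (S : Set E) (hclosed : IsClosed S)
    (hloc : ∀ x ∈ S, ∃ U : Set E, IsOpen U ∧ x ∈ U ∧ Convex ℝ (S ∩ U))
    (K : Set E) (hK : IsCompact K) :
    ∃ ε > 0, ∀ a b : E, a ∈ S → b ∈ S → a ∈ K → dist a b < ε → segment ℝ a b ⊆ S := by
  choose! U hUopen hUmem hUconv using hloc
  have hTK : IsCompact (S ∩ K) := hK.inter_left hclosed
  have hcov : (S ∩ K) ⊆ ⋃ i : ↥(S ∩ K), U i.1 := by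
    intro p hp
    exact mem_iUnion.2 ⟨⟨p, hp⟩, hUmem p hp.1⟩
  obtain ⟨δ, hδ, hball⟩ := lebesgue_number_lemma_of_metric hTK
    (fun i : ↥(S ∩ K) => hUopen i.1 i.2.1) hcov
  refine ⟨δ, hδ, ?_⟩
  intro a b ha hb haK hd
  obtain ⟨i, hi⟩ := hball a ⟨ha, haK⟩
  have hbU : b ∈ U i.1 := hi (by simpa [mem_ball, dist_comm] using hd)
  have haU : a ∈ U i.1 := hi (mem_ball_self hδ)
  intro z hz
  exact ((hUconv i.1 i.2.1).segment_subset ⟨ha, haU⟩ ⟨hb, hbU⟩ hz).1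

lemma aux_KEY {E : Type*} [NormedAddCommGroup E] [NormedSpace ℝ E] [FiniteDimensional ℝ E]
    (S : Set E) (hclosed : IsClosed S)
    (hloc : ∀ x ∈ S, ∃ U : Set E, IsOpen U ∧ x ∈ U ∧ Convex ℝ (S ∩ U))
    (x w : E) (hx : x ∈ S) (hw : w ∈ S) (hseg : segment ℝ x w ⊆ S) :
    ∃ δ > 0, ∀ w' ∈ S, dist w w' < δ → segment ℝ x w' ⊆ S := by
  classical
  obtain ⟨ε₀, hε₀, hUL⟩ := aux_UL S hclosed hloc (closedBall x (‖w - x‖ + 2))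
    (isCompact_closedBall _ _)
  set L := ‖w - x‖ with hLdef
  have hL0 : 0 ≤ L := norm_nonneg _
  set ε := min ε₀ 1 with hεdef
  have hε0 : 0 < ε := lt_min hε₀ one_pos
  have hε1 : ε ≤ 1 := min_le_right _ _
  have hεε₀ : ε ≤ ε₀ := min_le_left _ _
  set hstep := min (1/4 : ℝ) (ε / (4 * (L + 1))) with hhdef
  have hh0 : 0 < hstep := lt_min (by norm_num) (by positivity)
  have hh4 : hstep ≤ 1/4 := min_le_left _ _
  have hhε : hstep ≤ ε / (4 * (L + 1)) := min_le_right _ _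
  have hhmul : hstep * (4 * (L + 1)) ≤ ε := by
    rw [← le_div_iff₀ (by positivity)]
    exact hhε
  set θ := 1 - 4 * hstep ^ 2 / 9 with hθdef
  have hθ0 : 0 < θ := by
    rw [hθdef]
    nlinarith only [mul_le_mul hh4 hh4 hh0.le (by norm_num : (0:ℝ) ≤ 1/4)]
  have hθ1 : θ < 1 := by
    rw [hθdef]
    nlinarith only [mul_pos hh0 hh0]
  clear_value L ε hstep θ
  refine ⟨ε / 4, by linarith, ?_⟩
  intro w' hw' hdist
  set P : ℝ → ℝ → E := fun a b => x + a • (w - x) + b • (w' - x) with hPdef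
  clear_value P
  have hww' : ‖w' - w‖ < ε / 4 := by
    rw [← dist_eq_norm, dist_comm]
    exact hdist
  have hw'x : ‖w' - x‖ ≤ L + 1 := by
    have h0 : w' - x = (w' - w) + (w - x) := by abel
    rw [h0]
    calc ‖(w' - w) + (w - x)‖ ≤ ‖w' - w‖ + ‖w - x‖ := norm_add_le _ _
      _ ≤ L + 1 := by rw [← hLdef]; linarith
  have hKmem : ∀ a b : ℝ, 0 ≤ a → 0 ≤ b → a + b ≤ 1 → P a b ∈ closedBall x (L + 2) := by
    intro a b ha hb hab
    rw [mem_closedBall, dist_eq_norm]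
    have h0 : P a b - x = a • (w - x) + b • (w' - x) := by simp only [hPdef]; abel
    rw [h0]
    calc ‖a • (w - x) + b • (w' - x)‖ ≤ ‖a • (w - x)‖ + ‖b • (w' - x)‖ := norm_add_le _ _
      _ = a * L + b * ‖w' - x‖ := by
          rw [norm_smul, norm_smul, Real.norm_of_nonneg ha, Real.norm_of_nonneg hb, hLdef]
      _ ≤ L + 2 := by
          nlinarith only [hw'x, ha, hb, hab, hL0, norm_nonneg (w' - x),
            mul_le_mul_of_nonneg_left hw'x hb]
  have hwK : w ∈ closedBall x (L + 2) := by
    rw [mem_closedBall, dist_eq_norm, ← hLdef]; linarith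
  have htop : ∀ b : ℝ, 0 ≤ b → b ≤ 1 → P (1 - b) b ∈ S := by
    intro b hb hb1
    have hmem : P (1 - b) b ∈ segment ℝ w w' := by
      refine ⟨1 - b, b, by linarith, hb, by ring, ?_⟩
      simp only [hPdef]
      module
    exact hUL w w' hw hw' hwK (by rw [dist_eq_norm']; linarith) hmem
  have hbase : ∀ a : ℝ, 0 ≤ a → a ≤ 1 → P a 0 ∈ S := by
    intro a ha ha1
    have hmem : P a 0 ∈ segment ℝ x w := by
      refine ⟨1 - a, a, by linarith, ha, by ring, ?_⟩
      simp only [hPdef]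
      module
    exact hseg hmem
  have claim : ∀ m : ℕ, ∀ a b : ℝ, 0 ≤ a → 0 ≤ b → a + b ≤ 1 →
      (b ≤ (a + b) - θ ^ m * (2 + (a + b) - (a + b) ^ 2) ∨ b = 0 ∨ a + b = 1) →
      P a b ∈ S := by
    intro m
    induction m with
    | zero =>
      intro a b ha hb hab hcase
      rcases hcase with hc | hc | hc
      · exfalso
        rw [pow_zero, one_mul] at hc
        nlinarith only [hc, ha, hb, hab,
          mul_le_mul hab hab (by linarith : (0:ℝ) ≤ a + b) zero_le_one]
      · rw [hc] at hab ⊢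
        exact hbase a ha (by linarith)
      · have ha' : a = 1 - b := by linarith
        rw [ha']
        exact htop b hb (by linarith)
    | succ m ih =>
      intro a b ha hb hab hcase
      rcases hcase with hc | hc | hc
      · by_cases hb0 : b = 0
        · rw [hb0] at hab ⊢
          exact hbase a ha (by linarith)
        · by_cases hab1 : a + b = 1
          · have ha' : a = 1 - b := by linarith
            rw [ha']
            exact htop b hb (by linarith)
          · have hbpos : 0 < b := lt_of_le_of_ne hb (Ne.symm hb0)
            have hlpos : 0 < a + b := by linarith
            have hllt : a + b < 1 := lt_of_le_of_ne hab hab1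
            have hτ0 : 0 < θ ^ m := pow_pos hθ0 m
            have hτ1 : θ ^ m ≤ 1 := pow_le_one₀ hθ0.le hθ1.le
            have hc' : b ≤ (a + b) - θ * θ ^ m * (2 + (a + b) - (a + b) ^ 2) := by
              rw [pow_succ] at hc
              calc b ≤ (a + b) - θ ^ m * θ * (2 + (a + b) - (a + b) ^ 2) := hc
                _ = (a + b) - θ * θ ^ m * (2 + (a + b) - (a + b) ^ 2) := by ring
            set lA := max ((a + b) - hstep) 0 with hlAdef
            set lB := min ((a + b) + hstep) 1 with hlBdef
            have hlA0 : 0 ≤ lA := le_max_right _ _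
            have hlAl : lA < a + b := max_lt (by linarith) hlpos
            have hlB : a + b < lB := lt_min (by linarith) hllt
            have hlB1 : lB ≤ 1 := min_le_right _ _
            have hlAge : (a + b) - hstep ≤ lA := le_max_left _ _
            have hlBle : lB ≤ (a + b) + hstep := min_le_left _ _
            have hden : 0 < lB - lA := by linarith
            set lam := (lB - (a + b)) / (lB - lA) with hlamdef
            have hlam0 : 0 < lam := div_pos (by linarith) hden
            have hlam1 : lam < 1 := (div_lt_one hden).2 (by linarith)
            have hlamconv : lam * lA + (1 - lam) * lB = a + b := by
              have h1 : lam * (lB - lA) = lB - (a + b) := div_mul_cancel₀ _ hden.ne'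
              nlinarith only [h1]
            set capA := max (lA - θ ^ m * (2 + lA - lA ^ 2)) 0 with hcapAdef
            have hcapA0 : 0 ≤ capA := le_max_right _ _
            have hφA0 : 0 ≤ 2 + lA - lA ^ 2 := by
              nlinarith only [mul_nonneg hlA0 (by linarith : (0:ℝ) ≤ 1 - lA)]
            have hcapAlA : capA ≤ lA := max_le
              (by nlinarith only [mul_nonneg hτ0.le hφA0]) hlA0
            set capB := if (1:ℝ) ≤ (a + b) + hstep then (1:ℝ)
              else max (lB - θ ^ m * (2 + lB - lB ^ 2)) 0 with hcapBdef
            have hφB0 : 0 ≤ 2 + lB - lB ^ 2 := by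
              nlinarith only [mul_nonneg (by linarith : (0:ℝ) ≤ lB)
                (by linarith : (0:ℝ) ≤ 1 - lB)]
            have hcapB0 : 0 ≤ capB := by
              rw [hcapBdef]
              split
              · norm_num
              · exact le_max_right _ _
            have hcapBlB : capB ≤ lB := by
              rw [hcapBdef]
              split
              · next hcase2 => rw [hlBdef]; exact le_min (by linarith) le_rfl
              · exact max_le (by nlinarith only [mul_nonneg hτ0.le hφB0]) (by linarith)
            have hmemA : ∀ β : ℝ, 0 ≤ β → β ≤ capA → P (lA - β) β ∈ S := by
              intro β hβ0 hβ
              rcases eq_or_lt_of_le hβ0 with he | hβpos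
              · rw [← he]
                simpa using hbase lA hlA0 (by linarith)
              · have hcapApos : 0 < capA := lt_of_lt_of_le hβpos hβ
                have hval : capA = lA - θ ^ m * (2 + lA - lA ^ 2) := by
                  rcases max_cases (lA - θ ^ m * (2 + lA - lA ^ 2)) (0:ℝ) with ⟨he1, _⟩ | ⟨he1, _⟩
                  · rw [hcapAdef, he1]
                  · exfalso; rw [hcapAdef, he1] at hcapApos; exact lt_irrefl 0 hcapApos
                refine ih (lA - β) β (by linarith [hβ.trans hcapAlA]) hβ0 (by linarith)
                  (Or.inl ?_)
                have hsum : (lA - β) + β = lA := by ring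
                rw [hsum]
                rw [hval] at hβ
                linarith
            have hmemB : ∀ β : ℝ, 0 ≤ β → β ≤ capB → P (lB - β) β ∈ S := by
              intro β hβ0 hβ
              by_cases h1 : (1:ℝ) ≤ (a + b) + hstep
              · have hlBeq : lB = 1 := by rw [hlBdef]; exact min_eq_right (by linarith)
                rw [hcapBdef, if_pos h1] at hβ
                rw [hlBeq]
                exact htop β hβ0 hβ
              · rw [hcapBdef, if_neg h1] at hβ
                rcases eq_or_lt_of_le hβ0 with he | hβpos
                · rw [← he]
                  simpa using hbase lB (by linarith) hlB1
                · have hcapBpos : 0 < max (lB - θ ^ m * (2 + lB - lB ^ 2)) 0 :=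
                    lt_of_lt_of_le hβpos hβ
                  have hval : max (lB - θ ^ m * (2 + lB - lB ^ 2)) (0:ℝ)
                      = lB - θ ^ m * (2 + lB - lB ^ 2) := by
                    rcases max_cases (lB - θ ^ m * (2 + lB - lB ^ 2)) (0:ℝ) with ⟨he1, _⟩ | ⟨he1, _⟩
                    · exact he1
                    · exfalso; rw [he1] at hcapBpos; exact lt_irrefl 0 hcapBpos
                  rw [hval] at hβ
                  refine ih (lB - β) β
                    (by nlinarith only [hβ, mul_nonneg hτ0.le hφB0]) hβ0
                    (by linarith) (Or.inl ?_)
                  have hsum : (lB - β) + β = lB := by ring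
                  rw [hsum]
                  linarith
            -- feasibility
            have hFEAS : b ≤ lam * capA + (1 - lam) * capB :=
              aux_feas hstep θ (θ ^ m) (a + b) lA lB lam capA capB b
                hh0 hh4 hθdef hτ0 hτ1 hlpos hllt hbpos hc'
                hlAdef hlBdef hlamdef hcapAdef hcapBdef
            -- split b
            have h1lam : 0 < 1 - lam := by linarith
            set bB := min (b / (1 - lam)) capB with hbBdef
            have hbB0 : 0 ≤ bB := le_min (div_nonneg hbpos.le h1lam.le) hcapB0
            have hbBcap : bB ≤ capB := min_le_right _ _
            have hbBb : (1 - lam) * bB ≤ b := by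
              have h2 : bB ≤ b / (1 - lam) := min_le_left _ _
              calc (1 - lam) * bB ≤ (1 - lam) * (b / (1 - lam)) :=
                    mul_le_mul_of_nonneg_left h2 h1lam.le
                _ = b := by field_simp
            set bA := (b - (1 - lam) * bB) / lam with hbAdef
            have hbA0 : 0 ≤ bA := div_nonneg (by linarith) hlam0.le
            have hbAcap : bA ≤ capA := by
              rw [hbAdef, div_le_iff₀ hlam0]
              rcases min_cases (b / (1 - lam)) capB with ⟨he, _⟩ | ⟨he, _⟩
              · rw [hbBdef, he]
                have h3 : (1 - lam) * (b / (1 - lam)) = b := by field_simp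
                rw [h3]
                nlinarith only [mul_nonneg hcapA0 hlam0.le]
              · rw [hbBdef, he]
                linarith [hFEAS]
            have hbAl : bA ≤ lA := hbAcap.trans hcapAlA
            have hbBl : bB ≤ lB := hbBcap.trans hcapBlB
            have hsumb : lam * bA + (1 - lam) * bB = b := by
              rw [hbAdef]
              field_simp
              ring
            have hsuma : lam * (lA - bA) + (1 - lam) * (lB - bB) = a := by
              linear_combination hlamconv - hsumb
            have hcomb : P a b = lam • P (lA - bA) bA + (1 - lam) • P (lB - bB) bB := by
              have hae : a = lam * (lA - bA) + (1 - lam) * (lB - bB) := hsuma.symm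
              have hbe : b = lam * bA + (1 - lam) * bB := hsumb.symm
              rw [hae, hbe]
              simp only [hPdef]
              module
            have hmemseg : P a b ∈ segment ℝ (P (lA - bA) bA) (P (lB - bB) bB) :=
              ⟨lam, 1 - lam, hlam0.le, by linarith, by ring, hcomb.symm⟩
            have hAS : P (lA - bA) bA ∈ S := hmemA bA hbA0 hbAcap
            have hBS : P (lB - bB) bB ∈ S := hmemB bB hbB0 hbBcap
            have hAK : P (lA - bA) bA ∈ closedBall x (L + 2) :=
              hKmem (lA - bA) bA (by linarith) hbA0 (by linarith)
            have hdiffAB : P (lA - bA) bA - P (lB - bB) bB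
                = (lA - lB) • (w - x) + (bA - bB) • (w' - w) := by
              simp only [hPdef]
              module
            have hdistAB : dist (P (lA - bA) bA) (P (lB - bB) bB) < ε₀ := by
              rw [dist_eq_norm, hdiffAB]
              have e1 : ‖(lA - lB) • (w - x) + (bA - bB) • (w' - w)‖
                  ≤ |lA - lB| * L + |bA - bB| * ‖w' - w‖ := by
                calc ‖(lA - lB) • (w - x) + (bA - bB) • (w' - w)‖
                    ≤ ‖(lA - lB) • (w - x)‖ + ‖(bA - bB) • (w' - w)‖ := norm_add_le _ _
                  _ = |lA - lB| * L + |bA - bB| * ‖w' - w‖ := by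
                      rw [norm_smul, norm_smul, Real.norm_eq_abs, Real.norm_eq_abs, hLdef]
              have e2 : |lA - lB| ≤ 2 * hstep := by
                rw [abs_le]
                constructor <;> linarith
              have e3 : |bA - bB| ≤ 1 := by
                rw [abs_le]
                constructor <;> [skip; skip] <;> nlinarith only [hbA0, hbB0, hbAl, hbBl,
                  hlB1, hlAl, hllt]
              have e4 : |lA - lB| * L ≤ 2 * hstep * L :=
                mul_le_mul_of_nonneg_right e2 hL0
              have e5 : |bA - bB| * ‖w' - w‖ ≤ 1 * ‖w' - w‖ :=
                mul_le_mul_of_nonneg_right e3 (norm_nonneg _)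
              have e6 : 2 * hstep * L ≤ ε/2 - 2*hstep := by linarith only [hhmul]
              linarith only [e1, e4, e5, e6, hww', hεε₀, hh0, hε0]
            exact hUL _ _ hAS hBS hAK hdistAB hmemseg
      · rw [hc] at hab ⊢
        exact hbase a ha (by linarith)
      · have ha' : a = 1 - b := by linarith
        rw [ha']
        exact htop b hb (by linarith)
  -- conclude : segment x w' ⊆ S
  intro z hz
  rw [segment_eq_image] at hz
  obtain ⟨s, ⟨hs0, hs1⟩, rfl⟩ := hz
  have hz' : (1 - s) • x + s • w' = P 0 s := by simp only [hPdef]; module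
  show (1 - s) • x + s • w' ∈ S
  rw [hz']
  rcases eq_or_lt_of_le hs0 with he | hspos
  · have : P 0 s = x := by rw [← he]; simp [hPdef]
    rw [this]
    exact hx
  · have hS' : ∀ b', 0 ≤ b' → b' < s → P (s - b') b' ∈ S := by
      intro b' h0 hlt
      obtain ⟨m, hm⟩ := exists_pow_lt_of_lt_one
        (show (0:ℝ) < (s - b') * (4/9) by nlinarith only [hlt]) hθ1
      apply claim m (s - b') b' (by linarith) h0 (by linarith) (Or.inl ?_)
      have hsum : (s - b') + b' = s := by ring
      rw [hsum]
      have hφ : 2 + s - s ^ 2 ≤ 9/4 := by nlinarith only [sq_nonneg (s - 1/2)]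
      have hθm0 : 0 ≤ θ ^ m := pow_nonneg hθ0.le m
      nlinarith only [hm, hθm0, mul_le_mul_of_nonneg_left hφ hθm0]
    have hcl : P 0 s ∈ closure S := by
      rw [Metric.mem_closure_iff]
      intro r hr
      set d := min s r with hddef
      have hd0 : 0 < d := lt_min hspos hr
      have hds : d ≤ s := min_le_left _ _
      have hdr : d ≤ r := min_le_right _ _
      set b' := s - d / 2 with hb'def
      refine ⟨P (s - b') b', hS' b' (by rw [hb'def]; linarith) (by rw [hb'def]; linarith), ?_⟩
      have e : P 0 s - P (s - b') b' = (s - b') • (w' - w) := by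
        simp only [hPdef]
        module
      rw [dist_eq_norm, e, norm_smul, Real.norm_eq_abs]
      have e2 : |s - b'| = d / 2 := by rw [hb'def]; rw [abs_of_nonneg (by linarith)]; ring
      rw [e2]
      have e3 : ‖w' - w‖ ≤ 1 := by linarith
      nlinarith only [hd0, hdr, e3, norm_nonneg (w' - w), hr]
    rw [← hclosed.closure_eq]
    exact hcl

/-- Tietze–Nakajima: a closed, connected, locally convex subset of a
finite-dimensional real normed vector space is convex. -/
theorem closed_connected_locallyConvex_is_convex
    (E : Type*) [NormedAddCommGroup E] [NormedSpace ℝ E] [FiniteDimensional ℝ E]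
    (S : Set E) (hclosed : IsClosed S) (hconn : IsConnected S)
    (hloc : ∀ x ∈ S, ∃ U : Set E, IsOpen U ∧ x ∈ U ∧ Convex ℝ (S ∩ U)) :
    Convex ℝ S := by
  rw [convex_iff_segment_subset]
  intro x hx y hy
  -- the set of endpoints reachable from x
  set C := {y : E | segment ℝ x y ⊆ S} with hCdef
  have hCclosed : IsClosed C := by
    have : C = ⋂ t ∈ Icc (0:ℝ) 1, (fun y : E => (1 - t) • x + t • y) ⁻¹' S := by
      ext z
      simp only [hCdef, mem_setOf_eq, mem_iInter, mem_preimage]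
      constructor
      · intro hsub t ht
        exact hsub ((segment_eq_image ℝ x z).symm ▸ mem_image_of_mem _ ht)
      · intro hall u hu
        rw [segment_eq_image] at hu
        obtain ⟨t, ht, rfl⟩ := hu
        exact hall t ht
    rw [this]
    exact isClosed_biInter fun t _ => hclosed.preimage (by fun_prop)
  -- for each point of S ∩ C, a radius of stability
  have hkey : ∀ w ∈ S ∩ C, ∃ δ > 0, ∀ w' ∈ S, dist w w' < δ → w' ∈ C :=
    fun w hw => by
      obtain ⟨δ, hδ, hδ'⟩ := aux_KEY S hclosed hloc x w hx hw.1 hw.2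
      exact ⟨δ, hδ, fun w' hw' hd => hδ' w' hw' hd⟩
  choose! δ hδpos hδball using hkey
  set u := ⋃ (w : E) (_ : w ∈ S ∩ C), ball w (δ w) with hudef
  have huopen : IsOpen u := isOpen_iUnion fun w => isOpen_iUnion fun _ => isOpen_ball
  have hSuC : S ∩ u ⊆ C := by
    rintro z ⟨hzS, hzu⟩
    simp only [hudef, mem_iUnion] at hzu
    obtain ⟨w, hw, hzb⟩ := hzu
    exact hδball w hw z hzS (by rwa [mem_ball, dist_comm] at hzb)
  have hCu : S ∩ C ⊆ u := by
    intro z hz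
    simp only [hudef, mem_iUnion]
    exact ⟨z, hz, mem_ball_self (hδpos z hz)⟩
  -- connectedness argument
  have hxC : x ∈ C := by
    intro z hz
    rw [segment_same] at hz
    rwa [hz]
  have hSC : S ⊆ C := by
    by_contra hcon
    rw [Set.not_subset] at hcon
    obtain ⟨p, hpS, hpC⟩ := hcon
    have := hconn.isPreconnected u Cᶜ huopen hCclosed.isOpen_compl
      (fun z hz => by
        by_cases hzC : z ∈ C
        · exact Or.inl (hCu ⟨hz, hzC⟩)
        · exact Or.inr hzC)
      ⟨x, hx, hCu ⟨hx, hxC⟩⟩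
      ⟨p, hpS, hpC⟩
    obtain ⟨q, hqS, hqu, hqC⟩ := this
    exact hqC (hSuC ⟨hqS, hqu⟩)
  exact hSC hy
end
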